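/- arXiv:1310.4621 — 4 statements merged into one kernel-verified Lean document; each statement's English description precedes it below -/
import Mathlib

section
/- Let A ∈ ℝ^{d×d} satisfy 0 < τ(A) < ∞ (so A is invertible), and denote the entries of the inverse matrix by A^{-1}_{ij}. Then τ(A) = 1 / min((A^{-1}𝟙)^+) = max_{i=1,...,d} ( ( (Σ_{j=1}^d A^{-1}_{ij})^+ )^{-1} ), where 𝟙 = (1,...,1)'. -/
/-!
Since `τ(A) > 0` there is a positive `x` with `A x ≥ 1`, and by homogeneity
`min ((A v)⁺) ≤ τ(A) · min v` for every positive `v`. If a nonnegative `u` with `A u ≥ 1` had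
`u j = 0`, then `v = x + s u` would give `1 + s ≤ τ(A) · x j` for all `s ≥ 0`; so such `u` are
strictly positive. By the intermediate value theorem on the segment from `x` to `q`, every
solution of `A q ≥ 1` is strictly positive, so the solution set contains no ray with a negative
direction. This makes `A` injective and shows that `y = A⁻¹ 𝟙` is the least solution;
normalising gives `τ(A) = 1 / min y`.
-/

open scoped ENNReal

noncomputable def vmin {d : ℕ} (x : Fin d → ℝ) : ℝ := ⨅ i, x i

noncomputable def vpos {d : ℕ} (x : Fin d → ℝ) : Fin d → ℝ := fun i => max (x i) 0

noncomputable def tau {d : ℕ} (A : Matrix (Fin d) (Fin d) ℝ) : ℝ≥0∞ :=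
  ⨆ x ∈ {x : Fin d → ℝ | (∀ i, 0 < x i) ∧ vmin x = 1},
    ENNReal.ofReal (vmin (vpos (A.mulVec x)))

open Matrix Set

section vmin

variable {d : ℕ}

lemma vmin_le (x : Fin d → ℝ) (i : Fin d) : vmin x ≤ x i :=
  ciInf_le (Finite.bddBelow_range x) i

lemma le_vmin [NeZero d] {x : Fin d → ℝ} {c : ℝ} (h : ∀ i, c ≤ x i) : c ≤ vmin x :=
  le_ciInf h

lemma exists_eq_vmin [NeZero d] (x : Fin d → ℝ) : ∃ i, x i = vmin x :=
  exists_eq_ciInf_of_finite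

lemma vmin_pos [NeZero d] {x : Fin d → ℝ} (hx : ∀ i, 0 < x i) : 0 < vmin x := by
  obtain ⟨i, hi⟩ := exists_eq_vmin x
  exact hi ▸ hx i

lemma vmin_smul {c : ℝ} (hc : 0 ≤ c) (x : Fin d → ℝ) : vmin (c • x) = c * vmin x :=
  (Real.mul_iInf_of_nonneg hc x).symm

lemma vmin_inv_smul_self {x : Fin d → ℝ} (hx : 0 < vmin x) :
    vmin ((vmin x)⁻¹ • x) = 1 := by
  rw [vmin_smul (inv_nonneg.2 hx.le), inv_mul_cancel₀ hx.ne']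

lemma vmin_one [NeZero d] : vmin (1 : Fin d → ℝ) = 1 :=
  ciInf_const

lemma continuous_vmin [NeZero d] : Continuous (vmin : (Fin d → ℝ) → ℝ) := by
  have h : (vmin : (Fin d → ℝ) → ℝ) = fun x => Finset.univ.inf' Finset.univ_nonempty x := by
    funext x
    exact (Finset.inf'_univ_eq_ciInf x).symm
  rw [h]
  exact Continuous.finset_inf'_apply _ fun i _ => continuous_apply i

lemma iSup_inv_eq_inv_vmin [NeZero d] {x : Fin d → ℝ} (hx : ∀ i, 0 < x i) :
    ⨆ i, (x i)⁻¹ = (vmin x)⁻¹ := by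
  obtain ⟨i, hi⟩ := exists_eq_vmin x
  refine le_antisymm (ciSup_le fun j => inv_anti₀ (vmin_pos hx) (vmin_le x j)) ?_
  rw [← hi]
  exact le_ciSup (f := fun j => (x j)⁻¹) (Finite.bddAbove_range _) i

lemma vpos_eq_self {x : Fin d → ℝ} (hx : 0 ≤ x) : vpos x = x :=
  funext fun i => max_eq_left (hx i)

lemma vpos_smul {c : ℝ} (hc : 0 ≤ c) (x : Fin d → ℝ) : vpos (c • x) = c • vpos x := by
  ext i
  simp [vpos, mul_max_of_nonneg _ _ hc]

lemma le_vmin_vpos [NeZero d] {x : Fin d → ℝ} {c : ℝ} (h : ∀ i, c ≤ x i) : c ≤ vmin (vpos x) :=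
  le_vmin fun i => (h i).trans (le_max_left _ _)

lemma vmin_vpos_nonneg [NeZero d] (x : Fin d → ℝ) : 0 ≤ vmin (vpos x) :=
  le_vmin fun _ => le_max_right _ _

lemma vmin_vpos_le_of_pos {x : Fin d → ℝ} (h : 0 < vmin (vpos x)) (i : Fin d) :
    vmin (vpos x) ≤ x i := by
  have hi := vmin_le (vpos x) i
  rcases le_total (x i) 0 with hxi | hxi
  · rw [vpos, max_eq_right hxi] at hi
    linarith
  · rwa [vpos, max_eq_left hxi] at hi

lemma one_le_inv_vmin_vpos_smul {x : Fin d → ℝ} (h : 0 < vmin (vpos x)) :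
    1 ≤ (vmin (vpos x))⁻¹ • x := fun i => by
  rw [Pi.smul_apply, smul_eq_mul, Pi.one_apply, ← inv_mul_cancel₀ h.ne']
  exact mul_le_mul_of_nonneg_left (vmin_vpos_le_of_pos h i) (inv_nonneg.2 h.le)

end vmin

section tau

variable {d : ℕ} {A : Matrix (Fin d) (Fin d) ℝ}

lemma ofReal_le_tau {x : Fin d → ℝ} (hx : ∀ i, 0 < x i) (hx1 : vmin x = 1) :
    ENNReal.ofReal (vmin (vpos (A *ᵥ x))) ≤ tau A :=
  by unfold tau; exact le_iSup₂ (f := fun x _ => ENNReal.ofReal (vmin (vpos (A *ᵥ x)))) x ⟨hx, hx1⟩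

lemma vmin_vpos_le_toReal_tau_mul [NeZero d] (hA : tau A ≠ ⊤) {x : Fin d → ℝ}
    (hx : ∀ i, 0 < x i) : vmin (vpos (A *ᵥ x)) ≤ (tau A).toReal * vmin x := by
  have hm := vmin_pos hx
  have hc : 0 ≤ (vmin x)⁻¹ := inv_nonneg.2 hm.le
  have h := (ENNReal.ofReal_le_iff_le_toReal hA).1 (ofReal_le_tau (A := A)
    (x := (vmin x)⁻¹ • x) (fun i => mul_pos (inv_pos.2 hm) (hx i)) (vmin_inv_smul_self hm))
  rwa [mulVec_smul, vpos_smul hc, vmin_smul hc, inv_mul_le_iff₀ hm, mul_comm] at h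

lemma exists_pos_one_le_mulVec (h0 : 0 < tau A) :
    ∃ x : Fin d → ℝ, (∀ i, 0 < x i) ∧ 1 ≤ A *ᵥ x := by
  obtain ⟨x, ⟨hx, -⟩, hfx⟩ : ∃ x ∈ {x : Fin d → ℝ | (∀ i, 0 < x i) ∧ vmin x = 1},
      0 < ENNReal.ofReal (vmin (vpos (A *ᵥ x))) := by
    simpa only [tau, lt_iSup_iff, exists_prop] using h0
  rw [ENNReal.ofReal_pos] at hfx
  refine ⟨(vmin (vpos (A *ᵥ x)))⁻¹ • x, fun i => mul_pos (inv_pos.2 hfx) (hx i), ?_⟩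
  rw [mulVec_smul]
  exact one_le_inv_vmin_vpos_smul hfx

variable [NeZero d]

lemma pos_of_nonneg_of_one_le_mulVec (h0 : 0 < tau A) (hA : tau A ≠ ⊤) {u : Fin d → ℝ}
    (hu : 0 ≤ u) (hAu : 1 ≤ A *ᵥ u) (j : Fin d) : 0 < u j := by
  obtain ⟨x, hx, hAx⟩ := exists_pos_one_le_mulVec h0
  set M := (tau A).toReal
  have hM : 0 ≤ M := ENNReal.toReal_nonneg
  refine (hu j).lt_of_ne' fun huj => ?_
  set v := x + (M * x j) • u
  have hv : ∀ i, 0 < v i := fun i =>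
    add_pos_of_pos_of_nonneg (hx i) (mul_nonneg (mul_nonneg hM (hx j).le) (hu i))
  have lower : 1 + M * x j ≤ vmin (vpos (A *ᵥ v)) := le_vmin_vpos fun i => by
    have hui := mul_le_mul_of_nonneg_left (hAu i) (mul_nonneg hM (hx j).le)
    have hxi := hAx i
    simp only [v, mulVec_add, mulVec_smul, Pi.add_apply, Pi.smul_apply, Pi.one_apply,
      smul_eq_mul] at hui hxi ⊢
    linarith
  have upper : vmin v ≤ x j := by simpa [v, huj] using vmin_le v j
  nlinarith [vmin_vpos_le_toReal_tau_mul hA hv]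

lemma pos_of_one_le_mulVec (h0 : 0 < tau A) (hA : tau A ≠ ⊤) {q : Fin d → ℝ}
    (hAq : 1 ≤ A *ᵥ q) (k : Fin d) : 0 < q k := by
  obtain ⟨p, hp, hAp⟩ := exists_pos_one_le_mulVec h0
  by_contra! hqk
  set g : ℝ → ℝ := fun t => vmin (p + t • (q - p))
  have hg : ContinuousOn g (Icc 0 1) := (continuous_vmin.comp (by fun_prop)).continuousOn
  have hg1 : g 1 ≤ 0 := by simpa [g] using (vmin_le q k).trans hqk
  have hg0 : 0 < g 0 := by simpa [g] using vmin_pos hp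
  obtain ⟨t, ⟨ht0, ht1⟩, hgt⟩ := intermediate_value_Icc' zero_le_one hg ⟨hg1, hg0.le⟩
  set u := p + t • (q - p)
  obtain ⟨j, hj⟩ := exists_eq_vmin u
  have hu0 : vmin u = 0 := hgt
  have hu : 0 ≤ u := fun i => (hu0 ▸ vmin_le u i : (0 : ℝ) ≤ u i)
  have hAu : 1 ≤ A *ᵥ u := fun i => by
    simp only [u, mulVec_add, mulVec_smul, mulVec_sub, Pi.add_apply, Pi.smul_apply, Pi.sub_apply,
      smul_eq_mul]
    nlinarith [hAp i, hAq i]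
  exact (pos_of_nonneg_of_one_le_mulVec h0 hA hu hAu j).ne' (hj.trans hgt)

lemma nonneg_of_forall_one_le_mulVec_add_smul (h0 : 0 < tau A) (hA : tau A ≠ ⊤)
    {p w : Fin d → ℝ} (h : ∀ s : ℝ, 0 ≤ s → 1 ≤ A *ᵥ (p + s • w)) : 0 ≤ w := by
  intro i
  have hpos (s : ℝ) (hs : 0 ≤ s) : 0 < p i + s * w i := by
    simpa using pos_of_one_le_mulVec h0 hA (h s hs) i
  have hp : 0 < p i := by simpa using hpos 0 le_rfl
  by_contra! hwi
  have hzero : p i + p i / -w i * w i = 0 := by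
    rw [div_neg, neg_mul, div_mul_cancel₀ _ hwi.ne, add_neg_cancel]
  exact (hpos _ (div_nonneg hp.le (neg_nonneg.2 hwi.le))).ne' hzero

lemma isUnit_det_of_tau (h0 : 0 < tau A) (hA : tau A ≠ ⊤) : IsUnit A.det := by
  obtain ⟨x, -, hAx⟩ := exists_pos_one_le_mulVec h0
  have ray {z : Fin d → ℝ} (hz : A *ᵥ z = 0) : 0 ≤ z :=
    nonneg_of_forall_one_le_mulVec_add_smul h0 hA (p := x) fun _ _ => by
      rwa [mulVec_add, mulVec_smul, hz, smul_zero, add_zero]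
  refine isUnit_iff_ne_zero.2 fun hdet => ?_
  obtain ⟨z, hz0, hz⟩ := exists_mulVec_eq_zero_iff.2 hdet
  have hnz : 0 ≤ -z := ray (by rw [mulVec_neg, hz, neg_zero])
  exact hz0 (le_antisymm (neg_nonneg.1 hnz) (ray hz))

lemma mulVec_inv_mulVec_one (h0 : 0 < tau A) (hA : tau A ≠ ⊤) : A *ᵥ (A⁻¹ *ᵥ 1) = 1 := by
  rw [mulVec_mulVec, mul_nonsing_inv _ (isUnit_det_of_tau h0 hA), one_mulVec]

lemma inv_mulVec_one_le (h0 : 0 < tau A) (hA : tau A ≠ ⊤) {x : Fin d → ℝ}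
    (hx : 1 ≤ A *ᵥ x) : A⁻¹ *ᵥ 1 ≤ x := by
  have hy := mulVec_inv_mulVec_one h0 hA
  refine sub_nonneg.1 (nonneg_of_forall_one_le_mulVec_add_smul h0 hA
    (p := A⁻¹ *ᵥ 1) (w := x - A⁻¹ *ᵥ 1) fun s hs i => ?_)
  have hxi := hx i
  simp only [mulVec_add, mulVec_smul, mulVec_sub, hy, Pi.add_apply, Pi.smul_apply, Pi.sub_apply,
    Pi.one_apply, smul_eq_mul] at hxi ⊢
  nlinarith

lemma tau_eq_ofReal_inv_vmin (h0 : 0 < tau A) (hA : tau A ≠ ⊤) :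
    tau A = ENNReal.ofReal (vmin (A⁻¹ *ᵥ 1))⁻¹ := by
  have hAy := mulVec_inv_mulVec_one h0 hA
  set y := A⁻¹ *ᵥ 1
  have hy : ∀ i, 0 < y i := pos_of_one_le_mulVec h0 hA hAy.ge
  have hm : 0 < vmin y := vmin_pos hy
  apply le_antisymm
  · refine iSup₂_le fun x ⟨hx, hx1⟩ => ENNReal.ofReal_le_ofReal ?_
    rcases (vmin_vpos_nonneg (A *ᵥ x)).eq_or_lt with hc | hc
    · exact hc ▸ (inv_pos.2 hm).le
    set c := vmin (vpos (A *ᵥ x))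
    have hyx : y ≤ c⁻¹ • x :=
      inv_mulVec_one_le h0 hA (by rw [mulVec_smul]; exact one_le_inv_vmin_vpos_smul hc)
    have hmc : vmin y ≤ c⁻¹ := by
      simpa [vmin_smul (inv_nonneg.2 hc.le), hx1] using le_vmin fun i => (vmin_le y i).trans (hyx i)
    exact (le_inv_comm₀ hc hm).2 hmc
  · have hc : 0 ≤ (vmin y)⁻¹ := inv_nonneg.2 hm.le
    calc ENNReal.ofReal (vmin y)⁻¹
        = ENNReal.ofReal (vmin (vpos (A *ᵥ ((vmin y)⁻¹ • y)))) := by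
          rw [mulVec_smul, hAy, vpos_smul hc, vpos_eq_self zero_le_one, vmin_smul hc, vmin_one,
            mul_one]
      _ ≤ tau A := ofReal_le_tau (fun i => mul_pos (inv_pos.2 hm) (hy i)) (vmin_inv_smul_self hm)

end tau

/-- Lemma 2.2: if 0 < τ(A) < ∞ then
τ(A) = 1 / min((A⁻¹𝟙)⁺) = max_i (((Σ_j A⁻¹_{ij})⁺)⁻¹). -/
theorem tau_eq_inv_of_inv_one {d : ℕ} (hd : 0 < d) (A : Matrix (Fin d) (Fin d) ℝ)
    (h0 : 0 < tau A) (h1 : tau A < ⊤) :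
    tau A = ENNReal.ofReal (1 / vmin (vpos (A⁻¹.mulVec (fun _ => 1)))) ∧
    tau A = ENNReal.ofReal (⨆ i : Fin d, (max (∑ j, A⁻¹ i j) 0)⁻¹) := by
  have : NeZero d := ⟨hd.ne'⟩
  have hA := h1.ne
  have hy : ∀ i, 0 < (A⁻¹ *ᵥ 1) i := pos_of_one_le_mulVec h0 hA (mulVec_inv_mulVec_one h0 hA).ge
  have hrow (i : Fin d) : ∑ j, A⁻¹ i j = (A⁻¹ *ᵥ 1) i := by simp [mulVec, dotProduct]
  refine ⟨?_, ?_⟩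
  · change _ = ENNReal.ofReal (1 / vmin (vpos (A⁻¹ *ᵥ 1)))
    rw [one_div, vpos_eq_self fun i => (hy i).le]
    exact tau_eq_ofReal_inv_vmin h0 hA
  · simp_rw [hrow, max_eq_left (hy _).le, iSup_inv_eq_inv_vmin hy]
    exact tau_eq_ofReal_inv_vmin h0 hA
end

section
/- Let X, Y ≥ 0 be independent random variables, each regularly varying with index −1, and let α, β satisfy 0 ≤ β < min{1, α}. Then lim_{x→∞} P(X > x, Y^α X^β > x) / (P(X > x) · P(Y^α > x^{1−β})) = α/(α−β). -/
/-!
Write `F` for the tail of `X`, `G` for the tail of `Z = Y ^ α` (regularly varying with index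
`-1/α`) and `τ = x ^ (1 - β)`. For `β > 0`, on `{X > x}` the condition `Z X ^ β > x` holds
automatically when `Z ≥ τ`, and for `0 < Z < τ` it reads `X > x (τ / Z) ^ (1/β)`. By independence
`P(X > x, Z X ^ β > x) = F(x) P(Z ≥ τ) + E[F(x (τ / Z) ^ (1/β)); 0 < Z < τ]`.
Potter's bounds `F(x u) ≈ u⁻¹ F(x)`, uniform in `u ≥ 1` up to factors `(1 + ε) u ^ (± ε)`,
squeeze the second term between multiples `(1 + ε) ^ (∓1) F(x)` of truncated moments
`E[(Z / τ) ^ p; 0 < Z < τ]` with `p = (1 ± ε) / β`. Karamata's theorem, proved through the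
layer-cake formula and dominated convergence, gives `E[(Z / τ) ^ p; 0 < Z < τ] ~ G(τ) ρ / (p - ρ)`
with `ρ = 1/α`, and `P(Z ≥ τ) ~ G(τ)`. Letting `ε → 0` yields `1 + ρ / (1/β - ρ) = α / (α - β)`.
For `β = 0` the two events are independent and the ratio is identically `1`.
-/

open MeasureTheory ProbabilityTheory Filter Topology Set
open scoped ENNReal

/-- X is regularly varying with index -1: P(X > sx)/P(X > x) → s⁻¹ for all s > 0. -/
def RegVarNegOne {Ω : Type*} [MeasurableSpace Ω] (P : Measure Ω) (X : Ω → ℝ) : Prop :=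
  ∀ s : ℝ, 0 < s →
    Tendsto (fun x : ℝ => (P {ω | s * x < X ω}).toReal / (P {ω | x < X ω}).toReal)
      atTop (nhds s⁻¹)

theorem tendsto_of_eventually_squeeze_family {ι α β : Type*} [TopologicalSpace β] [LinearOrder β]
    [OrderTopology β] {m : Filter ι} [m.NeBot] {l : Filter α} {f : α → β} {g h : ι → α → β}
    {a b : ι → β} {c : β} (ha : Tendsto a m (𝓝 c)) (hb : Tendsto b m (𝓝 c))
    (hg : ∀ᶠ i in m, Tendsto (g i) l (𝓝 (a i))) (hh : ∀ᶠ i in m, Tendsto (h i) l (𝓝 (b i)))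
    (hgf : ∀ᶠ i in m, ∀ᶠ x in l, g i x ≤ f x) (hfh : ∀ᶠ i in m, ∀ᶠ x in l, f x ≤ h i x) :
    Tendsto f l (𝓝 c) := by
  refine tendsto_order.2 ⟨fun d hd => ?_, fun d hd => ?_⟩
  · obtain ⟨i, hdi, hgi, hgfi⟩ := ((ha.eventually (lt_mem_nhds hd)).and (hg.and hgf)).exists
    filter_upwards [hgi.eventually (lt_mem_nhds hdi), hgfi] with x h₁ h₂ using h₁.trans_le h₂
  · obtain ⟨i, hdi, hhi, hfhi⟩ := ((hb.eventually (gt_mem_nhds hd)).and (hh.and hfh)).exists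
    filter_upwards [hhi.eventually (gt_mem_nhds hdi), hfhi] with x h₁ h₂ using h₂.trans_lt h₁

section Iterate

variable {T : ℝ → ℝ} {s r x₀ x u : ℝ}

theorem Antitone.apply_mul_le_of_forall_apply_mul_le (hT : Antitone T) (hs : 1 < s)
    (hr : r ≤ 0) (hx₀ : 0 < x₀) (hstep : ∀ y ≥ x₀, T (s * y) ≤ s ^ r * T y) (hx : x₀ ≤ x)
    (hTx : 0 ≤ T x) (hu : 1 ≤ u) : T (x * u) ≤ s ^ (-r) * u ^ r * T x := by
  have hs₀ : 0 < s := one_pos.trans hs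
  have iter : ∀ k : ℕ, T (s ^ k * x) ≤ (s ^ k) ^ r * T x := by
    intro k
    induction k with
    | zero => simp
    | succ k ih =>
      have hk : x₀ ≤ s ^ k * x := hx.trans (le_mul_of_one_le_left (hx₀.trans_le hx).le
        (one_le_pow₀ hs.le))
      calc T (s ^ (k + 1) * x) = T (s * (s ^ k * x)) := by rw [pow_succ', mul_assoc]
        _ ≤ s ^ r * T (s ^ k * x) := hstep _ hk
        _ ≤ s ^ r * ((s ^ k) ^ r * T x) := by gcongr
        _ = (s ^ (k + 1)) ^ r * T x := by
          rw [pow_succ', Real.mul_rpow hs₀.le (by positivity), mul_assoc]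
  obtain ⟨k, hku, hus⟩ := exists_nat_pow_near hu hs
  have hus' : u / s ≤ s ^ k := by
    rw [div_le_iff₀ hs₀, ← pow_succ]
    exact hus.le
  calc T (x * u) ≤ T (s ^ k * x) := hT (by rw [mul_comm]; gcongr; linarith)
    _ ≤ (s ^ k) ^ r * T x := iter k
    _ ≤ (u / s) ^ r * T x :=
      mul_le_mul_of_nonneg_right (Real.rpow_le_rpow_of_nonpos (by positivity) hus' hr) hTx
    _ = s ^ (-r) * u ^ r * T x := by
      rw [Real.div_rpow (by linarith) hs₀.le, Real.rpow_neg hs₀.le]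
      ring

theorem Antitone.le_apply_mul_of_forall_le_apply_mul (hT : Antitone T) (hs : 1 < s)
    (hr : r ≤ 0) (hx₀ : 0 < x₀) (hstep : ∀ y ≥ x₀, s ^ r * T y ≤ T (s * y)) (hx : x₀ ≤ x)
    (hTx : 0 ≤ T x) (hu : 1 ≤ u) : s ^ r * u ^ r * T x ≤ T (x * u) := by
  have hs₀ : 0 < s := one_pos.trans hs
  have iter : ∀ k : ℕ, (s ^ k) ^ r * T x ≤ T (s ^ k * x) := by
    intro k
    induction k with
    | zero => simp
    | succ k ih =>
      have hk : x₀ ≤ s ^ k * x := hx.trans (le_mul_of_one_le_left (hx₀.trans_le hx).le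
        (one_le_pow₀ hs.le))
      calc (s ^ (k + 1)) ^ r * T x = s ^ r * ((s ^ k) ^ r * T x) := by
            rw [pow_succ', Real.mul_rpow hs₀.le (by positivity), mul_assoc]
        _ ≤ s ^ r * T (s ^ k * x) := by gcongr
        _ ≤ T (s * (s ^ k * x)) := hstep _ hk
        _ = T (s ^ (k + 1) * x) := by rw [pow_succ', mul_assoc]
  obtain ⟨k, hku, hus⟩ := exists_nat_pow_near hu hs
  calc s ^ r * u ^ r * T x = (s * u) ^ r * T x := by
        rw [Real.mul_rpow hs₀.le (by linarith)]
    _ ≤ (s ^ (k + 1)) ^ r * T x := by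
      refine mul_le_mul_of_nonneg_right (Real.rpow_le_rpow_of_nonpos (by positivity) ?_ hr) hTx
      rw [pow_succ']
      gcongr
    _ ≤ T (s ^ (k + 1) * x) := iter (k + 1)
    _ ≤ T (x * u) := hT (by rw [mul_comm]; gcongr; linarith)

end Iterate

def IsRegularlyVarying (T : ℝ → ℝ) (ρ : ℝ) : Prop :=
  ∀ s : ℝ, 0 < s → Tendsto (fun x => T (s * x) / T x) atTop (𝓝 (s ^ ρ))

namespace IsRegularlyVarying

variable {T : ℝ → ℝ} {ρ : ℝ}

theorem congr (h : IsRegularlyVarying T ρ) {T' : ℝ → ℝ} (hT : T =ᶠ[atTop] T') :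
    IsRegularlyVarying T' ρ := fun s hs =>
  (h s hs).congr' <| (hT.comp_tendsto (tendsto_id.const_mul_atTop hs)).div hT

theorem comp_rpow (h : IsRegularlyVarying T ρ) {γ : ℝ} (hγ : 0 < γ) :
    IsRegularlyVarying (fun x => T (x ^ γ)) (ρ * γ) := by
  intro s hs
  have hlim := (h (s ^ γ) (Real.rpow_pos_of_pos hs γ)).comp (tendsto_rpow_atTop hγ)
  rw [← Real.rpow_mul hs.le, mul_comm γ] at hlim
  refine hlim.congr' ?_
  filter_upwards [eventually_ge_atTop 0] with x hx
  simp only [Function.comp_apply, Real.mul_rpow hs.le hx]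

theorem pos_of_antitone (h : IsRegularlyVarying T ρ) (hT : Antitone T) (h0 : ∀ x, 0 ≤ T x)
    (x : ℝ) : 0 < T x := by
  refine (h0 x).lt_of_ne fun hx => ?_
  have hzero : (fun y => T (2 * y) / T y) =ᶠ[atTop] fun _ => 0 := by
    filter_upwards [eventually_ge_atTop x] with y hy
    rw [le_antisymm (hx ▸ hT hy) (h0 y), div_zero]
  exact (Real.rpow_pos_of_pos two_pos ρ).ne' <|
    tendsto_nhds_unique ((h 2 two_pos).congr' hzero) tendsto_const_nhds

theorem potter_bounds (h : IsRegularlyVarying T (-ρ)) (hT : Antitone T)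
    (hpos : ∀ x, 0 < T x) {ε : ℝ} (hε : 0 < ε) (hερ : ε ≤ ρ) :
    ∃ x₀ > 0, ∀ x ≥ x₀, ∀ u ≥ 1,
      (1 + ε)⁻¹ * u ^ (-(ρ + ε)) * T x ≤ T (x * u) ∧
        T (x * u) ≤ (1 + ε) * u ^ (-(ρ - ε)) * T x := by
  -- the scale `s` at which one step costs exactly the factor `1 + ε`
  set s := (1 + ε) ^ (ρ + ε)⁻¹
  have hρε : 0 < ρ + ε := by linarith
  have hs : 1 < s := Real.one_lt_rpow (by linarith) (inv_pos.2 hρε)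
  have hs₀ : 0 < s := one_pos.trans hs
  have hsρε : s ^ (ρ + ε) = 1 + ε := Real.rpow_inv_rpow (by linarith) (by linarith)
  have hlo : s ^ (-(ρ + ε)) < s ^ (-ρ) := Real.rpow_lt_rpow_of_exponent_lt hs (by linarith)
  have hhi : s ^ (-ρ) < s ^ (-(ρ - ε)) := Real.rpow_lt_rpow_of_exponent_lt hs (by linarith)
  obtain ⟨x₁, hx₁⟩ := eventually_atTop.1 <|
    ((h s hs₀).eventually (lt_mem_nhds hlo)).and ((h s hs₀).eventually (gt_mem_nhds hhi))
  refine ⟨max x₁ 1, lt_max_of_lt_right one_pos, fun x hx u hu => ⟨?_, ?_⟩⟩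
  · have := hT.le_apply_mul_of_forall_le_apply_mul hs (r := -(ρ + ε)) (by linarith)
      (lt_max_of_lt_right one_pos)
      (fun y hy => (le_div_iff₀ (hpos y)).1 (hx₁ y (le_of_max_le_left hy)).1.le) hx (hpos x).le hu
    rwa [Real.rpow_neg hs₀.le, hsρε] at this
  · calc T (x * u) ≤ s ^ (-(-(ρ - ε))) * u ^ (-(ρ - ε)) * T x :=
          hT.apply_mul_le_of_forall_apply_mul_le hs (by linarith) (lt_max_of_lt_right one_pos)
            (fun y hy => (div_le_iff₀ (hpos y)).1 (hx₁ y (le_of_max_le_left hy)).2.le)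
            hx (hpos x).le hu
      _ ≤ (1 + ε) * u ^ (-(ρ - ε)) * T x := by
        gcongr
        · exact (hpos x).le
        rw [neg_neg, ← hsρε]
        exact Real.rpow_le_rpow_of_exponent_le hs.le (by linarith)

theorem exists_apply_mul_le (h : IsRegularlyVarying T (-ρ)) (hT : Antitone T)
    (hpos : ∀ x, 0 < T x) {ε : ℝ} (hε : 0 < ε) (hερ : ε ≤ ρ) :
    ∃ C x₀, 0 < x₀ ∧ ∀ τ ≥ x₀, ∀ s ∈ Ioc (0 : ℝ) 1, T (s * τ) ≤ C * s ^ (-(ρ + ε)) * T τ := by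
  obtain ⟨x₀, hx₀, hP⟩ := h.potter_bounds hT hpos hε hερ
  refine ⟨(1 + ε) * max 1 (T 0 / T x₀), x₀, hx₀, fun τ hτ s ⟨hs₀, hs₁⟩ => ?_⟩
  have hτ₀ : 0 < τ := hx₀.trans_le hτ
  set a := s ^ (ρ + ε) with ha
  have ha₀ : 0 < a := Real.rpow_pos_of_pos hs₀ _
  have hsa : s ^ (-(ρ + ε)) = a⁻¹ := Real.rpow_neg hs₀.le _
  have hinv : s⁻¹ ^ (-(ρ + ε)) = a := by rw [Real.inv_rpow hs₀.le, Real.rpow_neg hs₀.le, inv_inv]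
  rw [hsa]
  have hM : 0 < (1 + ε) * a⁻¹ := by positivity
  by_cases hsτ : x₀ ≤ s * τ
  · have hlow := (hP (s * τ) hsτ s⁻¹ (one_le_inv₀ hs₀ |>.2 hs₁)).1
    rw [hinv, mul_comm s τ, mul_inv_cancel_right₀ hs₀.ne', mul_comm τ s] at hlow
    calc T (s * τ) = (1 + ε) * a⁻¹ * ((1 + ε)⁻¹ * a * T (s * τ)) := by field_simp
      _ ≤ (1 + ε) * a⁻¹ * T τ := by gcongr
      _ ≤ (1 + ε) * max 1 (T 0 / T x₀) * a⁻¹ * T τ := by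
        rw [mul_right_comm _ (max _ _)]
        exact mul_le_mul_of_nonneg_right (le_mul_of_one_le_right hM.le (le_max_left _ _))
          (hpos τ).le
  · have hτx₀ : τ / x₀ ≤ s⁻¹ := by
      rw [div_le_iff₀ hx₀, ← div_eq_inv_mul, le_div_iff₀ hs₀, mul_comm]
      exact (not_le.1 hsτ).le
    have hlow := (hP x₀ le_rfl (τ / x₀) ((one_le_div hx₀).2 hτ)).1
    rw [mul_div_cancel₀ τ hx₀.ne'] at hlow
    have ha_le : a ≤ (τ / x₀) ^ (-(ρ + ε)) :=
      hinv ▸ Real.rpow_le_rpow_of_nonpos (by positivity) hτx₀ (by linarith)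
    calc T (s * τ) ≤ T 0 := hT (by positivity)
      _ = (1 + ε) * (T 0 / T x₀) * a⁻¹ * ((1 + ε)⁻¹ * a * T x₀) := by
        field_simp [(hpos x₀).ne']
      _ ≤ (1 + ε) * max 1 (T 0 / T x₀) * a⁻¹ * T τ := by
        have hbound : (1 + ε)⁻¹ * a * T x₀ ≤ T τ :=
          le_trans (by gcongr; exact (hpos x₀).le) hlow
        have hTx₀ := (hpos x₀).le
        gcongr
        exact le_max_right _ _

end IsRegularlyVarying

theorem integral_Ioo_rpow_neg_sub_one {r : ℝ} (hr : r < 1) :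
    ∫ t in Ioo (0 : ℝ) 1, (t ^ (-r) - 1) = r / (1 - r) := by
  have hr' : -1 < -r := by linarith
  have h1r : 1 - r ≠ 0 := by linarith
  rw [← integral_Ioc_eq_integral_Ioo, ← intervalIntegral.integral_of_le zero_le_one,
    intervalIntegral.integral_sub (intervalIntegral.intervalIntegrable_rpow' hr')
      intervalIntegrable_const, integral_rpow (Or.inl hr'), Real.one_rpow,
    Real.zero_rpow (by linarith), intervalIntegral.integral_const, smul_eq_mul, neg_add_eq_sub]
  field_simp
  ring

noncomputable def truncatedMomentRatio (ν : Measure ℝ) (p τ : ℝ) : ℝ :=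
  (∫ z in Ioo 0 τ, (z / τ) ^ p ∂ν) / ν.real (Ioi τ)

theorem integrableOn_Ioo_div_rpow (ν : Measure ℝ) [IsFiniteMeasure ν] {τ q : ℝ} (hτ : 0 < τ)
    (hq : 0 ≤ q) : IntegrableOn (fun z => (z / τ) ^ q) (Ioo 0 τ) ν :=
  Integrable.of_bound ((Real.continuous_rpow_const hq).measurable.comp
      (measurable_id.div_const τ)).aestronglyMeasurable 1 <|
    ae_restrict_of_forall_mem measurableSet_Ioo fun z hz => by
      have := hz.1
      rw [Real.norm_of_nonneg (by positivity)]
      exact Real.rpow_le_one (div_nonneg hz.1.le hτ.le) ((div_le_one hτ).2 hz.2.le) hq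

section Tail

variable {μ : Measure ℝ} [IsFiniteMeasure μ]

theorem antitone_measureReal_Ioi : Antitone fun x => μ.real (Ioi x) :=
  fun _ _ hab => measureReal_mono (Ioi_subset_Ioi hab)

theorem tendsto_measureReal_Ici_div_Ioi {r : ℝ}
    (h : IsRegularlyVarying (fun x => μ.real (Ioi x)) r) (hpos : ∀ x, 0 < μ.real (Ioi x)) :
    Tendsto (fun x => μ.real (Ici x) / μ.real (Ioi x)) atTop (𝓝 1) := by
  have hlim : Tendsto (fun s : ℝ => s ^ r) (𝓝[<] 1) (𝓝 1) := by
    simpa using ((Real.continuousAt_rpow_const 1 r (Or.inl one_ne_zero)).tendsto).mono_left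
      nhdsWithin_le_nhds
  have hs : ∀ᶠ s in 𝓝[<] (1 : ℝ), s ∈ Ioo 0 1 := Ioo_mem_nhdsLT zero_lt_one
  refine tendsto_of_eventually_squeeze_family tendsto_const_nhds hlim
    (Eventually.of_forall fun _ => tendsto_const_nhds) (hs.mono fun s hs => h s hs.1)
    (Eventually.of_forall fun _ => Eventually.of_forall fun x =>
      (one_le_div (hpos x)).2 (measureReal_mono Ioi_subset_Ici_self)) ?_
  filter_upwards [hs] with s hs
  filter_upwards [eventually_gt_atTop 0] with x hx
  refine div_le_div_of_nonneg_right (measureReal_mono fun y hy => ?_) (hpos x).le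
  exact lt_of_lt_of_le (mul_lt_of_lt_one_left hx hs.2) hy

theorem tendsto_measureReal_Ioo_div_Ioi {r : ℝ}
    (h : IsRegularlyVarying (fun x => μ.real (Ioi x)) r) (hpos : ∀ x, 0 < μ.real (Ioi x))
    {s : ℝ} (hs : s ∈ Ioo (0 : ℝ) 1) :
    Tendsto (fun τ => μ.real (Ioo (s * τ) τ) / μ.real (Ioi τ)) atTop (𝓝 (s ^ r - 1)) := by
  refine ((h s hs.1).sub (tendsto_measureReal_Ici_div_Ioi h hpos)).congr' ?_
  filter_upwards [eventually_gt_atTop 0] with τ hτ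
  rw [← Ioi_sdiff_Ici, measureReal_sdiff (Ici_subset_Ioi.2 (mul_lt_of_lt_one_left hτ hs.2))
    measurableSet_Ici, sub_div]

theorem setIntegral_Ioo_div_rpow_eq {τ p : ℝ} (hτ : 0 < τ) (hp : 0 < p) :
    ∫ z in Ioo 0 τ, (z / τ) ^ p ∂μ = ∫ t in Ioo (0 : ℝ) 1, μ.real (Ioo (t ^ p⁻¹ * τ) τ) := by
  rw [(integrableOn_Ioo_div_rpow μ hτ hp.le).integral_eq_integral_meas_lt
    (ae_restrict_of_forall_mem measurableSet_Ioo fun z hz => by have := hz.1; positivity)]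
  have hlevel : ∀ t ∈ Ioi (0 : ℝ),
      (μ.restrict (Ioo 0 τ)).real {z | t < (z / τ) ^ p} = μ.real (Ioo (t ^ p⁻¹ * τ) τ) := by
    intro t (ht : 0 < t)
    rw [measureReal_restrict_apply (measurableSet_lt measurable_const (by fun_prop))]
    have hlt : ∀ z, 0 ≤ z → (t < (z / τ) ^ p ↔ t ^ p⁻¹ * τ < z) := fun z hz => by
      rw [← lt_div_iff₀ hτ, Real.rpow_inv_lt_iff_of_pos ht.le (by positivity) hp]
    congr 1
    ext z
    simp only [mem_inter_iff, mem_ofPred_eq, mem_Ioo]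
    constructor
    · rintro ⟨hzt, hz₀, hzτ⟩
      exact ⟨(hlt z hz₀.le).1 hzt, hzτ⟩
    · rintro ⟨hzt, hzτ⟩
      have hz₀ : 0 < z := lt_of_le_of_lt (by positivity) hzt
      exact ⟨(hlt z hz₀.le).2 hzt, hz₀, hzτ⟩
  rw [setIntegral_congr_fun measurableSet_Ioi hlevel,
    setIntegral_eq_of_subset_of_forall_sdiff_eq_zero measurableSet_Ioi Ioo_subset_Ioi_self]
  rintro t ⟨ht₀, ht₁⟩
  have ht : 1 ≤ t := le_of_not_gt fun h => ht₁ ⟨ht₀, h⟩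
  rw [Ioo_eq_empty (not_lt.2 (le_mul_of_one_le_left hτ.le (Real.one_le_rpow ht (by positivity)))),
    measureReal_empty]

theorem tendsto_truncatedMomentRatio {ρ p : ℝ} (hρ : 0 < ρ) (hp : ρ < p)
    (h : IsRegularlyVarying (fun x => μ.real (Ioi x)) (-ρ)) (hpos : ∀ x, 0 < μ.real (Ioi x)) :
    Tendsto (truncatedMomentRatio μ p) atTop (𝓝 (ρ / (p - ρ))) := by
  have hp₀ : 0 < p := hρ.trans hp
  set ε := min ρ ((p - ρ) / 2)
  have hε : 0 < ε := lt_min hρ (by linarith)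
  have hερ : ρ + ε < p := by linarith [min_le_right ρ ((p - ρ) / 2)]
  obtain ⟨C, x₀, hx₀, hdom⟩ :=
    h.exists_apply_mul_le antitone_measureReal_Ioi hpos hε (min_le_left _ _)
  have hval : ∫ t in Ioo (0 : ℝ) 1, (t ^ (-(ρ / p)) - 1) = ρ / (p - ρ) := by
    rw [integral_Ioo_rpow_neg_sub_one ((div_lt_one hp₀).2 hp)]
    field_simp
  rw [← hval]
  refine (tendsto_integral_filter_of_dominated_convergence
    (F := fun τ t => μ.real (Ioo (t ^ p⁻¹ * τ) τ) / μ.real (Ioi τ))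
    (fun t => C * t ^ (-((ρ + ε) / p)))
    ?meas ?dom ?bound ?lim).congr' ?eq
  case eq =>
    filter_upwards [eventually_gt_atTop 0] with τ hτ
    rw [integral_div, truncatedMomentRatio, setIntegral_Ioo_div_rpow_eq hτ hp₀]
  case meas =>
    refine Eventually.of_forall fun τ => (Measurable.div_const ?_ _).aestronglyMeasurable
    exact (Antitone.measurable fun a b hab => measureReal_mono (Ioo_subset_Ioo_left hab)).comp
      (by fun_prop)
  case dom =>
    filter_upwards [eventually_ge_atTop x₀] with τ hτ
    refine ae_restrict_of_forall_mem measurableSet_Ioo fun t ht => ?_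
    have hs : t ^ p⁻¹ ∈ Ioc (0 : ℝ) 1 :=
      ⟨Real.rpow_pos_of_pos ht.1 _, Real.rpow_le_one ht.1.le ht.2.le (by positivity)⟩
    rw [Real.norm_of_nonneg (by positivity), div_le_iff₀ (hpos τ)]
    calc μ.real (Ioo (t ^ p⁻¹ * τ) τ) ≤ μ.real (Ioi (t ^ p⁻¹ * τ)) :=
          measureReal_mono Ioo_subset_Ioi_self
      _ ≤ C * (t ^ p⁻¹) ^ (-(ρ + ε)) * μ.real (Ioi τ) := hdom τ hτ _ hs
      _ = C * t ^ (-((ρ + ε) / p)) * μ.real (Ioi τ) := by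
        rw [← Real.rpow_mul ht.1.le, inv_mul_eq_div, neg_div]
  case bound =>
    exact ((intervalIntegral.integrableOn_Ioo_rpow_iff one_pos).2
      (by rw [neg_lt_neg_iff, div_lt_one hp₀]; exact hερ)).const_mul C
  case lim =>
    refine ae_restrict_of_forall_mem measurableSet_Ioo fun t ht => ?_
    have hlim := tendsto_measureReal_Ioo_div_Ioi h hpos
      ⟨Real.rpow_pos_of_pos ht.1 p⁻¹, Real.rpow_lt_one ht.1.le ht.2 (by positivity)⟩
    rwa [← Real.rpow_mul ht.1.le, inv_mul_eq_div, neg_div] at hlim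

end Tail

theorem measureReal_prod_setOf_lt_fst (μ ν : Measure ℝ) [IsFiniteMeasure μ] [IsFiniteMeasure ν]
    {A : Set ℝ} (hA : MeasurableSet A) {g : ℝ → ℝ} (hg : Measurable g) :
    (μ.prod ν).real {q | q.2 ∈ A ∧ g q.2 < q.1} = ∫ z in A, μ.real (Ioi (g z)) ∂ν := by
  have hS : MeasurableSet {q : ℝ × ℝ | q.2 ∈ A ∧ g q.2 < q.1} :=
    (measurable_snd hA).inter (measurableSet_lt (hg.comp measurable_snd) measurable_fst)
  have hmeas : Measurable fun z => μ (Ioi (g z)) :=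
    (Antitone.measurable fun _ _ hab => measure_mono (Ioi_subset_Ioi hab)).comp hg
  calc (μ.prod ν).real {q | q.2 ∈ A ∧ g q.2 < q.1}
      = (∫⁻ z, A.indicator (fun z => μ (Ioi (g z))) z ∂ν).toReal := by
        rw [measureReal_def, Measure.prod_apply_symm hS]
        congr 1
        refine lintegral_congr fun z => ?_
        by_cases hz : z ∈ A
        · simp [hz, Ioi_def]
        · simp [hz]
    _ = ∫ z in A, μ.real (Ioi (g z)) ∂ν := by
        rw [lintegral_indicator hA, ← integral_toReal hmeas.aemeasurable
          (Eventually.of_forall fun _ => measure_lt_top _ _)]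
        rfl

theorem lt_and_lt_mul_rpow_iff {x a b β : ℝ} (hx : 0 < x) (hβ : 0 < β) :
    x < a ∧ x < b * a ^ β ↔
      (x < a ∧ x ^ (1 - β) ≤ b) ∨ (b ∈ Ioo 0 (x ^ (1 - β)) ∧ x * (x ^ (1 - β) / b) ^ β⁻¹ < a) := by
  set τ := x ^ (1 - β)
  have hτ : 0 < τ := Real.rpow_pos_of_pos hx _
  have hτx : τ * x ^ β = x := by rw [← Real.rpow_add hx, sub_add_cancel, Real.rpow_one]
  have hc : ∀ b > 0, (x * (τ / b) ^ β⁻¹) ^ β = x / b := fun b hb => by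
    rw [Real.mul_rpow hx.le (by positivity), Real.rpow_inv_rpow (by positivity) hβ.ne',
      ← mul_div_assoc, mul_comm, hτx]
  have hc_lt : ∀ b > 0, 0 ≤ a → (x * (τ / b) ^ β⁻¹ < a ↔ x < b * a ^ β) := fun b hb ha => by
    rw [← Real.rpow_lt_rpow_iff (by positivity) ha hβ, hc b hb, div_lt_iff₀' hb]
  constructor
  · rintro ⟨hxa, hxb⟩
    by_cases hb : τ ≤ b
    · exact Or.inl ⟨hxa, hb⟩
    have hb₀ : 0 < b := by
      by_contra! hb₀
      exact hxb.not_ge <| hx.le.trans' <|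
        mul_nonpos_of_nonpos_of_nonneg hb₀ (Real.rpow_nonneg (hx.trans hxa).le _)
    exact Or.inr ⟨⟨hb₀, lt_of_not_ge hb⟩, (hc_lt b hb₀ (hx.trans hxa).le).2 hxb⟩
  · rintro (⟨hxa, hb⟩ | ⟨⟨hb₀, hbτ⟩, hca⟩)
    · refine ⟨hxa, ?_⟩
      calc x = τ * x ^ β := hτx.symm
        _ < τ * a ^ β := by gcongr
        _ ≤ b * a ^ β := by gcongr; exact (Real.rpow_pos_of_pos (hx.trans hxa) _).le
    · have hxc : x ≤ x * (τ / b) ^ β⁻¹ :=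
        le_mul_of_one_le_right hx.le (Real.one_le_rpow ((one_le_div hb₀).2 hbτ.le) (by positivity))
      have hxa := hxc.trans_lt hca
      exact ⟨hxa, (hc_lt b hb₀ (hx.trans hxa).le).1 hca⟩

theorem measureReal_prod_setOf_lt_mul_rpow (μ ν : Measure ℝ) [IsFiniteMeasure μ]
    [IsFiniteMeasure ν] {x β : ℝ} (hx : 0 < x) (hβ : 0 < β) :
    (μ.prod ν).real {q | x < q.1 ∧ x < q.2 * q.1 ^ β} =
      μ.real (Ioi x) * ν.real (Ici (x ^ (1 - β))) +
        ∫ z in Ioo 0 (x ^ (1 - β)), μ.real (Ioi (x * (x ^ (1 - β) / z) ^ β⁻¹)) ∂ν := by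
  set τ := x ^ (1 - β)
  have hset : {q : ℝ × ℝ | x < q.1 ∧ x < q.2 * q.1 ^ β} =
      Ioi x ×ˢ Ici τ ∪ {q | q.2 ∈ Ioo 0 τ ∧ x * (τ / q.2) ^ β⁻¹ < q.1} := by
    ext q
    exact lt_and_lt_mul_rpow_iff hx hβ
  have hdisj : Disjoint (Ioi x ×ˢ Ici τ) {q : ℝ × ℝ | q.2 ∈ Ioo 0 τ ∧ x * (τ / q.2) ^ β⁻¹ < q.1} :=
    disjoint_left.2 fun q hq hq' => (not_lt.2 hq.2) hq'.1.2
  have hg : Measurable fun z : ℝ => x * (τ / z) ^ β⁻¹ := by fun_prop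
  rw [hset, measureReal_union hdisj ((measurable_snd measurableSet_Ioo).inter
      (measurableSet_lt (hg.comp measurable_snd) measurable_fst)), measureReal_prod_prod,
    measureReal_prod_setOf_lt_fst μ ν measurableSet_Ioo hg]

theorem integrableOn_measureReal_Ioi_comp (μ ν : Measure ℝ) [IsFiniteMeasure μ]
    [IsFiniteMeasure ν] {g : ℝ → ℝ} (hg : Measurable g) (s : Set ℝ) :
    IntegrableOn (fun z => μ.real (Ioi (g z))) s ν :=
  Integrable.of_bound (antitone_measureReal_Ioi.measurable.comp hg).aestronglyMeasurable
    (μ.real univ) <| Eventually.of_forall fun _ => by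
      rw [Real.norm_of_nonneg measureReal_nonneg]
      exact measureReal_mono (subset_univ _)

theorem div_rpow_inv_rpow_neg {z τ β r : ℝ} (hz : 0 < z) (hτ : 0 < τ) :
    ((τ / z) ^ β⁻¹) ^ (-r) = (z / τ) ^ (r / β) := by
  rw [← Real.rpow_mul (by positivity), ← inv_div, Real.inv_rpow (by positivity),
    ← Real.rpow_neg (by positivity)]
  ring_nf

section PotterIntegral

variable {μ ν : Measure ℝ} [IsFiniteMeasure μ] [IsFiniteMeasure ν] {x τ β c r : ℝ}

theorem setIntegral_measureReal_Ioi_mul_rpow_le (hτ : 0 < τ) (hβ : 0 < β) (hr : 0 ≤ r)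
    (hP : ∀ u ≥ 1, μ.real (Ioi (x * u)) ≤ c * u ^ (-r) * μ.real (Ioi x)) :
    ∫ z in Ioo 0 τ, μ.real (Ioi (x * (τ / z) ^ β⁻¹)) ∂ν ≤
      c * μ.real (Ioi x) * ∫ z in Ioo 0 τ, (z / τ) ^ (r / β) ∂ν := by
  rw [← integral_const_mul]
  refine setIntegral_mono_on (integrableOn_measureReal_Ioi_comp μ ν (by fun_prop) _)
    ((integrableOn_Ioo_div_rpow ν hτ (by positivity)).const_mul _) measurableSet_Ioo
    fun z hz => ?_
  have hu := hP ((τ / z) ^ β⁻¹) (Real.one_le_rpow ((one_le_div hz.1).2 hz.2.le) (by positivity))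
  rw [div_rpow_inv_rpow_neg hz.1 hτ] at hu
  linarith

theorem le_setIntegral_measureReal_Ioi_mul_rpow (hτ : 0 < τ) (hβ : 0 < β) (hr : 0 ≤ r)
    (hP : ∀ u ≥ 1, c * u ^ (-r) * μ.real (Ioi x) ≤ μ.real (Ioi (x * u))) :
    c * μ.real (Ioi x) * ∫ z in Ioo 0 τ, (z / τ) ^ (r / β) ∂ν ≤
      ∫ z in Ioo 0 τ, μ.real (Ioi (x * (τ / z) ^ β⁻¹)) ∂ν := by
  rw [← integral_const_mul]
  refine setIntegral_mono_on ((integrableOn_Ioo_div_rpow ν hτ (by positivity)).const_mul _)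
    (integrableOn_measureReal_Ioi_comp μ ν (by fun_prop) _) measurableSet_Ioo
    fun z hz => ?_
  have hu := hP ((τ / z) ^ β⁻¹) (Real.one_le_rpow ((one_le_div hz.1).2 hz.2.le) (by positivity))
  rw [div_rpow_inv_rpow_neg hz.1 hτ] at hu
  linarith

end PotterIntegral

theorem tendsto_one_add_mul_div_sub_nhdsGT {κ ρ β : ℝ} (hβ : 0 < β) (hβρ : β * ρ < κ)
    {φ ψ : ℝ → ℝ} (hφ : ContinuousAt φ 0) (hψ : ContinuousAt ψ 0) (hφ₀ : φ 0 = 1)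
    (hψ₀ : ψ 0 = κ) :
    Tendsto (fun ε => 1 + φ ε * (ρ / (ψ ε / β - ρ))) (𝓝[>] 0) (𝓝 (κ / (κ - β * ρ))) := by
  have hρκ : ρ < κ / β := by rwa [lt_div_iff₀ hβ, mul_comm]
  have hden : ψ 0 / β - ρ ≠ 0 := by rw [hψ₀]; linarith
  have hcont : ContinuousAt (fun ε => 1 + φ ε * (ρ / (ψ ε / β - ρ))) 0 := by
    fun_prop (disch := exact hden)
  convert hcont.tendsto.mono_left nhdsWithin_le_nhds using 2
  have : κ - β * ρ ≠ 0 := by linarith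
  rw [hφ₀, hψ₀]
  field_simp
  ring

section JointTail

variable {μ ν : Measure ℝ} [IsFiniteMeasure μ] [IsFiniteMeasure ν] {κ ρ β : ℝ}

theorem eventually_measureReal_prod_div_bounds (hβ : 0 < β)
    (hμ : IsRegularlyVarying (fun x => μ.real (Ioi x)) (-κ)) (hμpos : ∀ x, 0 < μ.real (Ioi x))
    (hνpos : ∀ t, 0 < ν.real (Ioi t)) {ε : ℝ} (hε : 0 < ε) (hεκ : ε ≤ κ) :
    ∀ᶠ x in atTop,
      ν.real (Ici (x ^ (1 - β))) / ν.real (Ioi (x ^ (1 - β))) +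
          (1 + ε)⁻¹ * truncatedMomentRatio ν ((κ + ε) / β) (x ^ (1 - β)) ≤
        (μ.prod ν).real {q | x < q.1 ∧ x < q.2 * q.1 ^ β} /
          (μ.real (Ioi x) * ν.real (Ioi (x ^ (1 - β)))) ∧
      (μ.prod ν).real {q | x < q.1 ∧ x < q.2 * q.1 ^ β} /
          (μ.real (Ioi x) * ν.real (Ioi (x ^ (1 - β)))) ≤
        ν.real (Ici (x ^ (1 - β))) / ν.real (Ioi (x ^ (1 - β))) +
          (1 + ε) * truncatedMomentRatio ν ((κ - ε) / β) (x ^ (1 - β)) := by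
  obtain ⟨x₀, hx₀, hP⟩ := hμ.potter_bounds antitone_measureReal_Ioi hμpos hε hεκ
  filter_upwards [eventually_ge_atTop x₀] with x hx
  have hx₀' : 0 < x := hx₀.trans_le hx
  have hsplit := measureReal_prod_setOf_lt_mul_rpow μ ν hx₀' hβ
  set τ := x ^ (1 - β)
  have hτ : 0 < τ := Real.rpow_pos_of_pos hx₀' _
  have hF := hμpos x
  have hG := hνpos τ
  have hlo := le_setIntegral_measureReal_Ioi_mul_rpow (ν := ν) hτ hβ (r := κ + ε) (by linarith)
    fun u hu => (hP x hx u hu).1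
  have hhi := setIntegral_measureReal_Ioi_mul_rpow_le (ν := ν) hτ hβ (r := κ - ε) (by linarith)
    fun u hu => (hP x hx u hu).2
  rw [hsplit, add_div (μ.real (Ioi x) * _), mul_div_mul_left _ _ hF.ne']
  unfold truncatedMomentRatio
  constructor
  · gcongr
    calc (1 + ε)⁻¹ * ((∫ z in Ioo 0 τ, (z / τ) ^ ((κ + ε) / β) ∂ν) / ν.real (Ioi τ))
        = (1 + ε)⁻¹ * μ.real (Ioi x) * (∫ z in Ioo 0 τ, (z / τ) ^ ((κ + ε) / β) ∂ν) /
            (μ.real (Ioi x) * ν.real (Ioi τ)) := by field_simp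
      _ ≤ _ := by gcongr
  · gcongr
    calc _ ≤ (1 + ε) * μ.real (Ioi x) * (∫ z in Ioo 0 τ, (z / τ) ^ ((κ - ε) / β) ∂ν) /
            (μ.real (Ioi x) * ν.real (Ioi τ)) := by gcongr
      _ = (1 + ε) * ((∫ z in Ioo 0 τ, (z / τ) ^ ((κ - ε) / β) ∂ν) / ν.real (Ioi τ)) := by
        field_simp

theorem tendsto_measureReal_prod_div_of_pos (hκ : 0 < κ) (hρ : 0 < ρ) (hβ : 0 < β)
    (hβ₁ : β < 1) (hβρ : β * ρ < κ)
    (hμ : IsRegularlyVarying (fun x => μ.real (Ioi x)) (-κ))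
    (hν : IsRegularlyVarying (fun t => ν.real (Ioi t)) (-ρ)) :
    Tendsto (fun x => (μ.prod ν).real {q | x < q.1 ∧ x < q.2 * q.1 ^ β} /
        (μ.real (Ioi x) * ν.real (Ioi (x ^ (1 - β))))) atTop (𝓝 (κ / (κ - β * ρ))) := by
  have hμpos := hμ.pos_of_antitone antitone_measureReal_Ioi fun _ => measureReal_nonneg
  have hνpos := hν.pos_of_antitone antitone_measureReal_Ioi fun _ => measureReal_nonneg
  have hτ : Tendsto (fun x : ℝ => x ^ (1 - β)) atTop atTop := tendsto_rpow_atTop (by linarith)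
  have hI := (tendsto_measureReal_Ici_div_Ioi hν hνpos).comp hτ
  have hK : ∀ q, ρ < q → Tendsto (fun x => truncatedMomentRatio ν q (x ^ (1 - β))) atTop
      (𝓝 (ρ / (q - ρ))) := fun q hq => (tendsto_truncatedMomentRatio hρ hq hν hνpos).comp hτ
  have hρκ : ρ < κ / β := by rwa [lt_div_iff₀ hβ, mul_comm]
  refine tendsto_of_eventually_squeeze_family (m := 𝓝[>] 0)
    (g := fun ε x => ν.real (Ici (x ^ (1 - β))) / ν.real (Ioi (x ^ (1 - β))) +
      (1 + ε)⁻¹ * truncatedMomentRatio ν ((κ + ε) / β) (x ^ (1 - β)))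
    (h := fun ε x => ν.real (Ici (x ^ (1 - β))) / ν.real (Ioi (x ^ (1 - β))) +
      (1 + ε) * truncatedMomentRatio ν ((κ - ε) / β) (x ^ (1 - β)))
    (tendsto_one_add_mul_div_sub_nhdsGT (φ := fun ε => (1 + ε)⁻¹) (ψ := fun ε => κ + ε) hβ hβρ
      (by fun_prop (disch := norm_num)) (by fun_prop) (by norm_num) (by simp))
    (tendsto_one_add_mul_div_sub_nhdsGT (φ := fun ε => 1 + ε) (ψ := fun ε => κ - ε) hβ hβρ
      (by fun_prop) (by fun_prop) (by simp) (by simp))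
    ?_ ?_ ?_ ?_
  · filter_upwards [self_mem_nhdsWithin] with ε (hε : 0 < ε)
    exact hI.add ((hK _ (hρκ.trans_le (by gcongr; linarith))).const_mul _)
  · filter_upwards [Ioo_mem_nhdsGT (sub_pos.2 hβρ)] with ε hε
    refine hI.add ((hK _ ?_).const_mul _)
    rw [lt_div_iff₀ hβ]
    linarith [hε.2]
  · filter_upwards [Ioo_mem_nhdsGT hκ] with ε hε
    exact (eventually_measureReal_prod_div_bounds hβ hμ hμpos hνpos hε.1 hε.2.le).mono
      fun _ hx => hx.1
  · filter_upwards [Ioo_mem_nhdsGT hκ] with ε hε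
    exact (eventually_measureReal_prod_div_bounds hβ hμ hμpos hνpos hε.1 hε.2.le).mono
      fun _ hx => hx.2

theorem tendsto_measureReal_prod_div (hκ : 0 < κ) (hρ : 0 < ρ) (hβ₀ : 0 ≤ β)
    (hβ₁ : β < 1) (hβρ : β * ρ < κ)
    (hμ : IsRegularlyVarying (fun x => μ.real (Ioi x)) (-κ))
    (hν : IsRegularlyVarying (fun t => ν.real (Ioi t)) (-ρ)) :
    Tendsto (fun x => (μ.prod ν).real {q | x < q.1 ∧ x < q.2 * q.1 ^ β} /
        (μ.real (Ioi x) * ν.real (Ioi (x ^ (1 - β))))) atTop (𝓝 (κ / (κ - β * ρ))) := by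
  rcases hβ₀.eq_or_lt with rfl | hβ
  · have hμpos := hμ.pos_of_antitone antitone_measureReal_Ioi fun _ => measureReal_nonneg
    have hνpos := hν.pos_of_antitone antitone_measureReal_Ioi fun _ => measureReal_nonneg
    refine tendsto_const_nhds.congr fun x => ?_
    rw [zero_mul, sub_zero, div_self hκ.ne', sub_zero, Real.rpow_one]
    simp only [Real.rpow_zero, mul_one]
    rw [show {q : ℝ × ℝ | x < q.1 ∧ x < q.2} = Ioi x ×ˢ Ioi x from rfl, measureReal_prod_prod,
      div_self (mul_pos (hμpos x) (hνpos x)).ne']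
  · exact tendsto_measureReal_prod_div_of_pos hκ hρ hβ hβ₁ hβρ hμ hν

end JointTail

theorem RegVarNegOne.isRegularlyVarying {Ω : Type*} [MeasurableSpace Ω] {P : Measure Ω}
    {X : Ω → ℝ} (h : RegVarNegOne P X) (hX : Measurable X) :
    IsRegularlyVarying (fun x => (P.map X).real (Ioi x)) (-1) := by
  intro s hs
  rw [Real.rpow_neg_one]
  simp only [map_measureReal_apply hX measurableSet_Ioi]
  exact h s hs

theorem RegVarNegOne.isRegularlyVarying_rpow {Ω : Type*} [MeasurableSpace Ω] {P : Measure Ω}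
    {Y : Ω → ℝ} (h : RegVarNegOne P Y) (hY : Measurable Y) (hY₀ : ∀ ω, 0 ≤ Y ω) {α : ℝ}
    (hα : 0 < α) :
    IsRegularlyVarying (fun t => (P.map fun ω => Y ω ^ α).real (Ioi t)) (-α⁻¹) := by
  rw [← neg_one_mul]
  refine ((h.isRegularlyVarying hY).comp_rpow (inv_pos.2 hα)).congr ?_
  filter_upwards [eventually_ge_atTop 0] with t ht
  rw [map_measureReal_apply hY measurableSet_Ioi,
    map_measureReal_apply (hY.pow_const α) measurableSet_Ioi]
  congr 1
  ext ω
  exact Real.rpow_inv_lt_iff_of_pos ht (hY₀ ω) hα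

theorem product_tail_limit_general {Ω : Type*} [MeasurableSpace Ω] (P : Measure Ω)
    [IsProbabilityMeasure P] (X Y : Ω → ℝ)
    (hXmeas : Measurable X) (hYmeas : Measurable Y)
    (hY0 : ∀ ω, 0 ≤ Y ω)
    (hindep : IndepFun X Y P)
    (hXrv : RegVarNegOne P X) (hYrv : RegVarNegOne P Y)
    (α β : ℝ) (hβ0 : 0 ≤ β) (hβ : β < min 1 α) :
    Tendsto (fun x : ℝ =>
        (P {ω | x < X ω ∧ x < Y ω ^ α * X ω ^ β}).toReal /
        ((P {ω | x < X ω}).toReal * (P {ω | x ^ (1 - β) < Y ω ^ α}).toReal))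
      atTop (nhds (α / (α - β))) := by
  have hβ₁ : β < 1 := hβ.trans_le (min_le_left _ _)
  have hβα : β < α := hβ.trans_le (min_le_right _ _)
  have hα : 0 < α := hβ0.trans_lt hβα
  have hZ : Measurable fun ω => Y ω ^ α := hYmeas.pow_const α
  have hlaw : P.map (fun ω => (X ω, Y ω ^ α)) = (P.map X).prod (P.map fun ω => Y ω ^ α) :=
    (indepFun_iff_map_prod_eq_prod_map_map hXmeas.aemeasurable hZ.aemeasurable).1
      (hindep.comp measurable_id (measurable_id.pow_const α))
  have key := tendsto_measureReal_prod_div one_pos (inv_pos.2 hα) hβ0 hβ₁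
    (by rwa [← div_eq_mul_inv, div_lt_one hα]) (hXrv.isRegularlyVarying hXmeas)
    (hYrv.isRegularlyVarying_rpow hYmeas hY0 hα)
  rw [← hlaw] at key
  convert key using 2 with x
  · rw [map_measureReal_apply (hXmeas.prodMk hZ) (by measurability),
      map_measureReal_apply hXmeas measurableSet_Ioi, map_measureReal_apply hZ measurableSet_Ioi]
    rfl
  · field_simp

/-- Lemma 6.1, equation (6.6): for independent nonnegative X, Y regularly varying with
index -1 and 0 ≤ β < min{1, α},
P(X > x, Y^α X^β > x)/(P(X > x)·P(Y^α > x^{1-β})) → α/(α-β). -/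
theorem product_tail_limit {Ω : Type*} [MeasurableSpace Ω] (P : Measure Ω)
    [IsProbabilityMeasure P] (X Y : Ω → ℝ)
    (hXmeas : Measurable X) (hYmeas : Measurable Y)
    (hX0 : ∀ ω, 0 ≤ X ω) (hY0 : ∀ ω, 0 ≤ Y ω)
    (hindep : IndepFun X Y P)
    (hXrv : RegVarNegOne P X) (hYrv : RegVarNegOne P Y)
    (α β : ℝ) (hβ0 : 0 ≤ β) (hβ : β < min 1 α) :
    Tendsto (fun x : ℝ =>
        (P {ω | x < X ω ∧ x < Y ω ^ α * X ω ^ β}).toReal /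
        ((P {ω | x < X ω}).toReal * (P {ω | x ^ (1 - β) < Y ω ^ α}).toReal))
      atTop (nhds (α / (α - β))) :=
  product_tail_limit_general P X Y hXmeas hYmeas hY0 hindep hXrv hYrv α β hβ0 hβ
end

section
/- Let X_1,...,X_n be independent nonnegative random variables, each regularly varying with index −1. Let α_1,...,α_n, β_1,...,β_n ≥ 0 with max_i α_i > 0 and max_i β_i > 0, and set Y_0 = Π_{i=1}^n X_i^{α_i}, Y_1 = Π_{i=1}^n X_i^{β_i}. Let (κ_1,...,κ_n) be a solution of the linear program 'minimize Σ κ_i subject to Σ α_i κ_i ≥ 1, Σ β_i κ_i ≥ 1, κ_i ≥ 0'. Then for every ε > 0, as x → ∞: P(Y_0 > x, Y_1 > x) = o(x^{ε − Σκ_i}) and x^{−ε − Σκ_i} = o(P(Y_0 > x, Y_1 > x)). -/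
open MeasureTheory ProbabilityTheory Filter Topology
open scoped ENNReal

/-- feasibility for the n-dimensional linear program -/
def FeasN {n : ℕ} (a b κ : Fin n → ℝ) : Prop :=
  (∀ i, 0 ≤ κ i) ∧ 1 ≤ ∑ i, a i * κ i ∧ 1 ≤ ∑ i, b i * κ i

/-!
Regular variation gives Potter-type bounds `y ^ (-1 - δ) ≤ P(X > y) ≤ y ^ (-1 + δ)` for large `y`,
obtained by iterating the ratio bound at `s = 2` along a geometric sequence.

Lower bound: the box `{X i > x ^ ((1 + δ) * κ i + δ) for all i}` lies inside `{Y₀ > x, Y₁ > x}`,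
and by independence its probability is a product of tails, roughly `x ^ (-∑ κ i)`.

Upper bound: write `max 1 (X i) = x ^ (L i)`; on `{Y₀ > x, Y₁ > x}` the vector `L` is feasible
for the linear program. Rounding `L` down to the grid `δ ℕ` (capped at `K`) covers the event by
finitely many boxes `{max 1 (X i) ≥ x ^ (δ * w i)}`, each of probability at most
`x ^ (-(1 - δ) * δ * ∑ w i) ≤ x ^ (-(1 - δ) * (∑ κ i - n * δ))` by optimality of `κ`.
-/

open Asymptotics

lemma isLittleO_rpow_rpow_atTop {p q : ℝ} (h : p < q) :
    (fun x : ℝ => x ^ p) =o[atTop] fun x => x ^ q := by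
  refine (isLittleO_iff_tendsto' ?_).2 ?_
  · filter_upwards [eventually_gt_atTop 0] with x hx h0
    exact absurd h0 (Real.rpow_pos_of_pos hx q).ne'
  · refine (tendsto_rpow_neg_atTop (sub_pos.2 h)).congr' ?_
    filter_upwards [eventually_gt_atTop 0] with x hx
    rw [← Real.rpow_sub hx, neg_sub]

lemma le_pow_mul_of_forall_le_mul {g : ℝ → ℝ} {s c x₁ : ℝ} (hs : 1 ≤ s) (hx₁ : 0 ≤ x₁)
    (hc : 0 ≤ c) (h : ∀ x ≥ x₁, g (s * x) ≤ c * g x) (k : ℕ) :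
    g (s ^ k * x₁) ≤ c ^ k * g x₁ := by
  induction k with
  | zero => simp
  | succ k ih =>
    calc g (s ^ (k + 1) * x₁) = g (s * (s ^ k * x₁)) := by ring_nf
      _ ≤ c * g (s ^ k * x₁) := h _ (le_mul_of_one_le_left hx₁ (one_le_pow₀ hs))
      _ ≤ c * (c ^ k * g x₁) := by gcongr
      _ = c ^ (k + 1) * g x₁ := by ring

section Potter

variable {f : ℝ → ℝ} {s p : ℝ}

theorem Antitone.isBigO_rpow_of_eventually_le_mul (hf : Antitone f) (hf0 : ∀ x, 0 ≤ f x)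
    (hs : 1 < s) (hp : p ≤ 0) (h : ∀ᶠ x in atTop, f (s * x) ≤ s ^ p * f x) :
    f =O[atTop] fun x => x ^ p := by
  obtain ⟨x₁, hx₁⟩ := eventually_atTop.1 (h.and (eventually_gt_atTop 0))
  have hx₁0 : 0 < x₁ := (hx₁ x₁ le_rfl).2
  have hiter := le_pow_mul_of_forall_le_mul hs.le hx₁0.le (by positivity)
    fun x hx => (hx₁ x hx).1
  refine IsBigO.of_bound (f x₁ * (s * x₁) ^ (-p)) ?_
  filter_upwards [eventually_ge_atTop x₁] with x hx
  obtain ⟨k, hk, hk'⟩ := exists_nat_pow_near ((one_le_div hx₁0).2 hx) hs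
  have hx0 : 0 < x := hx₁0.trans_le hx
  have hsk : x / (s * x₁) ≤ s ^ k := by
    have := (div_lt_iff₀ hx₁0).1 hk'
    rw [pow_succ] at this
    rw [div_le_iff₀ (by positivity)]
    linarith
  rw [Real.norm_of_nonneg (hf0 x), Real.norm_of_nonneg (by positivity)]
  calc f x ≤ f (s ^ k * x₁) := hf ((le_div_iff₀ hx₁0).1 hk)
    _ ≤ (s ^ p) ^ k * f x₁ := hiter k
    _ = f x₁ * (s ^ k) ^ p := by rw [Real.rpow_pow_comm (by positivity), mul_comm]
    _ ≤ f x₁ * (x / (s * x₁)) ^ p :=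
      mul_le_mul_of_nonneg_left (Real.rpow_le_rpow_of_nonpos (by positivity) hsk hp) (hf0 x₁)
    _ = f x₁ * (s * x₁) ^ (-p) * x ^ p := by
      rw [Real.div_rpow hx0.le (by positivity), Real.rpow_neg (by positivity)]
      ring

theorem Antitone.rpow_isBigO_of_eventually_mul_le (hf : Antitone f) (hs : 1 < s) (hp : p ≤ 0)
    (hpos : ∀ᶠ x in atTop, 0 < f x) (h : ∀ᶠ x in atTop, s ^ p * f x ≤ f (s * x)) :
    (fun x => x ^ p) =O[atTop] f := by
  obtain ⟨x₁, hx₁⟩ := eventually_atTop.1 ((h.and hpos).and (eventually_gt_atTop 0))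
  have hx₁0 : 0 < x₁ := (hx₁ x₁ le_rfl).2
  have hfx₁ : 0 < f x₁ := (hx₁ x₁ le_rfl).1.2
  have hiter := le_pow_mul_of_forall_le_mul (g := fun x => -f x) (c := s ^ p) hs.le hx₁0.le
    (by positivity) fun x hx => by linarith [(hx₁ x hx).1.1]
  have hC : 0 < (s / x₁) ^ p * f x₁ := by positivity
  refine IsBigO.of_bound ((s / x₁) ^ p * f x₁)⁻¹ ?_
  filter_upwards [eventually_ge_atTop x₁] with x hx
  obtain ⟨k, hk, hk'⟩ := exists_nat_pow_near ((one_le_div hx₁0).2 hx) hs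
  have hx0 : 0 < x := hx₁0.trans_le hx
  have hsk : s ^ (k + 1) ≤ s / x₁ * x := by
    have := (le_div_iff₀ hx₁0).1 hk
    rw [pow_succ, div_mul_eq_mul_div, le_div_iff₀ hx₁0]
    nlinarith
  have hfx : (s / x₁) ^ p * f x₁ * x ^ p ≤ f x :=
    calc (s / x₁) ^ p * f x₁ * x ^ p = (s / x₁ * x) ^ p * f x₁ := by
          rw [Real.mul_rpow (by positivity) hx0.le]; ring
      _ ≤ (s ^ (k + 1)) ^ p * f x₁ := by
          gcongr ?_ * _
          exact Real.rpow_le_rpow_of_nonpos (by positivity) hsk hp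
      _ = (s ^ p) ^ (k + 1) * f x₁ := by rw [Real.rpow_pow_comm (by positivity)]
      _ ≤ f (s ^ (k + 1) * x₁) := by linarith [hiter (k + 1)]
      _ ≤ f x := hf ((div_lt_iff₀ hx₁0).1 hk').le
  have hxp : 0 < x ^ p := by positivity
  rw [Real.norm_of_nonneg hxp.le, Real.norm_of_nonneg ((mul_pos hC hxp).le.trans hfx),
    inv_mul_eq_div, le_div_iff₀ hC]
  linarith

end Potter

section RatioAtTwo

variable {f : ℝ → ℝ}

theorem Antitone.isLittleO_rpow_of_tendsto_div (hf : Antitone f) (hf0 : ∀ x, 0 ≤ f x)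
    (hlim : Tendsto (fun x => f (2 * x) / f x) atTop (𝓝 2⁻¹)) {p : ℝ} (hp : -1 < p) :
    f =o[atTop] fun x => x ^ p := by
  obtain ⟨p', hp', hp'p⟩ := exists_between (lt_min hp neg_one_lt_zero)
  have h2 : (2 : ℝ)⁻¹ < 2 ^ p' := by
    rw [← Real.rpow_neg_one]
    exact Real.rpow_lt_rpow_of_exponent_lt one_lt_two hp'
  have hstep : ∀ᶠ x in atTop, f (2 * x) ≤ 2 ^ p' * f x := by
    filter_upwards [hlim.eventually (gt_mem_nhds h2), eventually_ge_atTop 0] with x hx hx0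
    rcases (hf0 x).lt_or_eq with h0 | h0
    · exact ((div_lt_iff₀ h0).1 hx).le
    · rw [← h0, mul_zero, h0]
      exact hf (by linarith)
  exact (hf.isBigO_rpow_of_eventually_le_mul hf0 one_lt_two
    (hp'p.trans_le (min_le_right _ _)).le hstep).trans_isLittleO
    (isLittleO_rpow_rpow_atTop (hp'p.trans_le (min_le_left _ _)))

theorem Antitone.rpow_isLittleO_of_tendsto_div (hf : Antitone f) (hf0 : ∀ x, 0 ≤ f x)
    (hlim : Tendsto (fun x => f (2 * x) / f x) atTop (𝓝 2⁻¹)) {q : ℝ} (hq : q < -1) :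
    (fun x => x ^ q) =o[atTop] f := by
  obtain ⟨q', hqq', hq'⟩ := exists_between hq
  have h2 : (2 : ℝ) ^ q' < 2⁻¹ := by
    rw [← Real.rpow_neg_one]
    exact Real.rpow_lt_rpow_of_exponent_lt one_lt_two hq'
  have hpos : ∀ᶠ x in atTop, 0 < f x := by
    filter_upwards [hlim.eventually_ne (inv_ne_zero two_ne_zero)] with x hx
    exact (hf0 x).lt_of_ne' fun h => hx (by simp [h])
  have hstep : ∀ᶠ x in atTop, 2 ^ q' * f x ≤ f (2 * x) := by
    filter_upwards [hlim.eventually (lt_mem_nhds h2), hpos] with x hx h0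
    exact ((lt_div_iff₀ h0).1 hx).le
  exact (isLittleO_rpow_rpow_atTop hqq').trans_isBigO
    (hf.rpow_isBigO_of_eventually_mul_le one_lt_two (by linarith) hpos hstep)

end RatioAtTwo

section Tail

variable {Ω : Type*} [MeasurableSpace Ω] {P : Measure Ω} [IsProbabilityMeasure P] {X : Ω → ℝ}

lemma antitone_measureReal_lt : Antitone fun y => P.real {ω | y < X ω} :=
  fun _ _ hyz => measureReal_mono fun _ hω => hyz.trans_lt hω

lemma RegVarNegOne.isLittleO_rpow (hrv : RegVarNegOne P X) {p : ℝ} (hp : -1 < p) :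
    (fun y => P.real {ω | y < X ω}) =o[atTop] fun y => y ^ p :=
  antitone_measureReal_lt.isLittleO_rpow_of_tendsto_div (fun _ => measureReal_nonneg)
    (hrv 2 two_pos) hp

lemma RegVarNegOne.rpow_isLittleO (hrv : RegVarNegOne P X) {q : ℝ} (hq : q < -1) :
    (fun y => y ^ q) =o[atTop] fun y => P.real {ω | y < X ω} :=
  antitone_measureReal_lt.rpow_isLittleO_of_tendsto_div (fun _ => measureReal_nonneg)
    (hrv 2 two_pos) hq

lemma RegVarNegOne.eventually_measureReal_le_max_le (hrv : RegVarNegOne P X) {p : ℝ}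
    (hp : -1 < p) : ∀ᶠ y in atTop, P.real {ω | y ≤ max 1 (X ω)} ≤ y ^ p := by
  have hhalf := (tendsto_id.atTop_div_const (zero_lt_two' ℝ)).eventually
    ((hrv.isLittleO_rpow hp).bound (c := 2 ^ p) (by positivity))
  filter_upwards [hhalf, eventually_gt_atTop 1] with y hy hy1
  rw [Real.norm_of_nonneg measureReal_nonneg, Real.norm_of_nonneg (by positivity),
    id, Real.div_rpow (by positivity) zero_le_two, mul_div_cancel₀ _ (by positivity)] at hy
  refine le_trans (measureReal_mono fun ω (hω : y ≤ max 1 (X ω)) => ?_) hy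
  have := (le_max_iff.1 hω).resolve_left (not_le.2 hy1)
  show y / 2 < X ω
  linarith

lemma RegVarNegOne.eventually_measureReal_rpow_le_max_le (hrv : RegVarNegOne P X) {p : ℝ}
    (hp : -1 < p) {u : ℝ} (hu : 0 ≤ u) :
    ∀ᶠ x in atTop, P.real {ω | x ^ u ≤ max 1 (X ω)} ≤ x ^ (u * p) := by
  rcases hu.eq_or_lt with rfl | hu
  · simp only [Real.rpow_zero, zero_mul]
    exact Eventually.of_forall fun _ => measureReal_le_one
  · filter_upwards [(tendsto_rpow_atTop hu).eventually (hrv.eventually_measureReal_le_max_le hp),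
      eventually_ge_atTop 0] with x hx hx0
    rwa [Real.rpow_mul hx0]

lemma RegVarNegOne.eventually_rpow_le_measureReal (hrv : RegVarNegOne P X) {q : ℝ}
    (hq : q < -1) {u : ℝ} (hu : 0 < u) :
    ∀ᶠ x in atTop, x ^ (u * q) ≤ P.real {ω | x ^ u < X ω} := by
  filter_upwards [(tendsto_rpow_atTop hu).eventually ((hrv.rpow_isLittleO hq).bound one_pos),
    eventually_ge_atTop 0] with x hx hx0
  rw [Real.rpow_mul hx0]
  rw [one_mul, Real.norm_of_nonneg measureReal_nonneg] at hx
  exact (Real.le_norm_self _).trans hx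

end Tail

lemma ProbabilityTheory.iIndepFun.measureReal_iInter_preimage {Ω ι : Type*} [MeasurableSpace Ω]
    {P : Measure Ω} [Fintype ι] {X : ι → Ω → ℝ} (h : iIndepFun X P) {s : ι → Set ℝ}
    (hs : ∀ i, MeasurableSet (s i)) :
    P.real (⋂ i, X i ⁻¹' s i) = ∏ i, P.real (X i ⁻¹' s i) := by
  simp only [measureReal_def]
  rw [h.meas_iInter fun i => ⟨s i, hs i, rfl⟩, ENNReal.toReal_prod]

section ProdRpow

variable {ι : Type*} [Fintype ι] {x : ℝ} {c u y : ι → ℝ}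

lemma lt_prod_rpow_of_rpow_le (hx : 1 < x) (hc : ∀ i, 0 ≤ c i) (hcu : 1 < ∑ i, c i * u i)
    (h : ∀ i, x ^ u i ≤ y i) : x < ∏ i, y i ^ c i := by
  have hx0 : 0 < x := by linarith
  calc x = x ^ (1 : ℝ) := (Real.rpow_one x).symm
    _ < x ^ (∑ i, c i * u i) := Real.rpow_lt_rpow_of_exponent_lt hx hcu
    _ = ∏ i, (x ^ u i) ^ c i := by
      rw [Real.rpow_sum_of_pos hx0]
      exact Finset.prod_congr rfl fun i _ => by rw [mul_comm, Real.rpow_mul hx0.le]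
    _ ≤ ∏ i, y i ^ c i := Finset.prod_le_prod (fun i _ => by positivity)
      fun i _ => Real.rpow_le_rpow (by positivity) (h i) (hc i)

lemma one_lt_sum_of_lt_prod_rpow (hx : 1 < x) (hc : ∀ i, 0 ≤ c i) (hy : ∀ i, 0 ≤ y i)
    (h : ∀ i, y i ≤ x ^ u i) (hxy : x < ∏ i, y i ^ c i) : 1 < ∑ i, c i * u i := by
  have hx0 : 0 < x := by linarith
  rw [← Real.rpow_lt_rpow_left_iff hx, Real.rpow_one]
  calc x < ∏ i, y i ^ c i := hxy
    _ ≤ ∏ i, (x ^ u i) ^ c i := Finset.prod_le_prod (fun i _ => Real.rpow_nonneg (hy i) _)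
      fun i _ => Real.rpow_le_rpow (hy i) (h i) (hc i)
    _ = x ^ (∑ i, c i * u i) := by
      rw [Real.rpow_sum_of_pos hx0]
      exact Finset.prod_congr rfl fun i _ => by rw [mul_comm, Real.rpow_mul hx0.le]

end ProdRpow

lemma FeasN.mono {n : ℕ} {a b κ κ' : Fin n → ℝ} (ha : ∀ i, 0 ≤ a i) (hb : ∀ i, 0 ≤ b i)
    (h : FeasN a b κ) (hκ : κ ≤ κ') : FeasN a b κ' := by
  obtain ⟨hκ0, hκa, hκb⟩ := h
  refine ⟨fun i => (hκ0 i).trans (hκ i), ?_, ?_⟩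
  · exact hκa.trans (Finset.sum_le_sum fun i _ => mul_le_mul_of_nonneg_left (hκ i) (ha i))
  · exact hκb.trans (Finset.sum_le_sum fun i _ => mul_le_mul_of_nonneg_left (hκ i) (hb i))

lemma exists_mem_piFinset_range_floor {ι : Type*} [Fintype ι] [DecidableEq ι] {δ S : ℝ}
    (hδ : 0 < δ) {K : ℕ} (hK : S ≤ K * δ) {L : ι → ℝ} (hL : 0 ≤ L)
    (hS : ∀ L', L ≤ L' → S ≤ ∑ i, L' i) :
    ∃ w ∈ Fintype.piFinset fun _ => Finset.range (K + 1),
      (∀ i, (w i : ℝ) * δ ≤ L i) ∧ S - Fintype.card ι * δ ≤ ∑ i, (w i : ℝ) * δ := by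
  set v : ι → ℕ := fun i => ⌊L i / δ⌋₊
  have hvL : ∀ i, (v i : ℝ) * δ ≤ L i := fun i =>
    (le_div_iff₀ hδ).1 (Nat.floor_le (div_nonneg (hL i) hδ.le))
  refine ⟨fun i => min (v i) K, Fintype.mem_piFinset.2 fun i => Finset.mem_range.2
    (Nat.lt_succ_of_le (min_le_right _ _)), fun i => ?_, ?_⟩
  · refine le_trans ?_ (hvL i)
    gcongr
    exact min_le_left _ _
  have hcard : 0 ≤ (Fintype.card ι : ℝ) * δ := by positivity
  -- A capped coordinate alone contributes `K * δ ≥ S`; otherwise `(v + 1) * δ ≥ L` gives the bound.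
  by_cases hcap : ∃ i, K ≤ v i
  · obtain ⟨i, hi⟩ := hcap
    have : (K : ℝ) * δ ≤ ∑ j, ((min (v j) K : ℕ) : ℝ) * δ := by
      calc (K : ℝ) * δ = ((min (v i) K : ℕ) : ℝ) * δ := by rw [min_eq_right hi]
        _ ≤ _ := Finset.single_le_sum (f := fun j => ((min (v j) K : ℕ) : ℝ) * δ)
          (fun j _ => by positivity) (Finset.mem_univ i)
    linarith
  · simp only [not_exists, not_le] at hcap
    have hw : ∀ i, min (v i) K = v i := fun i => min_eq_left (hcap i).le
    simp only [hw]
    have hup := hS (fun i => (v i + 1) * δ) fun i =>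
      ((div_lt_iff₀ hδ).1 (Nat.lt_floor_add_one (L i / δ))).le
    simp only [add_mul, one_mul, Finset.sum_add_distrib, Finset.sum_const, Finset.card_univ,
      nsmul_eq_mul] at hup
    linarith

lemma setOf_lt_prod_rpow_subset_biUnion {Ω : Type*} {n : ℕ} {X : Fin n → Ω → ℝ}
    (hX0 : ∀ i ω, 0 ≤ X i ω) {a b : Fin n → ℝ} (ha : ∀ i, 0 ≤ a i) (hb : ∀ i, 0 ≤ b i) {S : ℝ}
    (hS : ∀ κ, FeasN a b κ → S ≤ ∑ i, κ i) {δ : ℝ} (hδ : 0 < δ) {K : ℕ} (hK : S ≤ K * δ)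
    {x : ℝ} (hx : 1 < x) :
    {ω | x < ∏ i, X i ω ^ a i ∧ x < ∏ i, X i ω ^ b i} ⊆
      ⋃ w ∈ (Fintype.piFinset fun _ : Fin n => Finset.range (K + 1)).filter
          (fun w => S - n * δ ≤ ∑ i, (w i : ℝ) * δ),
        ⋂ i, X i ⁻¹' {t | x ^ ((w i : ℝ) * δ) ≤ max 1 t} := by
  rintro ω ⟨hya, hyb⟩
  -- `max 1` keeps `L` nonnegative, and a grid coordinate `w i = 0` then imposes no constraint.
  set L : Fin n → ℝ := fun i => Real.logb x (max 1 (X i ω))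
  have hxL : ∀ i, x ^ L i = max 1 (X i ω) := fun i =>
    Real.rpow_logb (by linarith) hx.ne' (by positivity)
  have hXL : ∀ i, X i ω ≤ x ^ L i := fun i => (hxL i).symm ▸ le_max_right _ _
  have hL0 : 0 ≤ L := fun i => Real.logb_nonneg hx (le_max_left _ _)
  have hfeas : FeasN a b L :=
    ⟨hL0, (one_lt_sum_of_lt_prod_rpow hx ha (hX0 · ω) hXL hya).le,
      (one_lt_sum_of_lt_prod_rpow hx hb (hX0 · ω) hXL hyb).le⟩
  obtain ⟨w, hw, hwL, hwS⟩ := exists_mem_piFinset_range_floor hδ hK hL0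
    fun L' hL' => hS L' (hfeas.mono ha hb hL')
  rw [Fintype.card_fin] at hwS
  refine Set.mem_biUnion (Finset.mem_filter.2 ⟨hw, hwS⟩) (Set.mem_iInter.2 fun i => ?_)
  show x ^ ((w i : ℝ) * δ) ≤ max 1 (X i ω)
  rw [← hxL i]
  exact Real.rpow_le_rpow_of_exponent_le hx.le (hwL i)

lemma exists_mem_Ioo_of_eventually {p : ℝ → Prop} (h : ∀ᶠ δ in 𝓝 0, p δ) :
    ∃ δ ∈ Set.Ioo (0 : ℝ) 1, p δ :=
  ((eventually_nhdsWithin_of_eventually_nhds h).and (Ioo_mem_nhdsGT one_pos)).exists.imp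
    fun _ h => ⟨h.2, h.1⟩

section Boxes

variable {Ω ι : Type*} [MeasurableSpace Ω] {P : Measure Ω} [IsProbabilityMeasure P] [Fintype ι]
  {X : ι → Ω → ℝ} {u : ι → ℝ}

lemma eventually_measureReal_iInter_le (hindep : iIndepFun X P)
    (hrv : ∀ i, RegVarNegOne P (X i)) {p : ℝ} (hp : -1 < p) (hp0 : p ≤ 0) (hu : ∀ i, 0 ≤ u i)
    {T : ℝ} (hT : T ≤ ∑ i, u i) :
    ∀ᶠ x in atTop, P.real (⋂ i, X i ⁻¹' {t | x ^ u i ≤ max 1 t}) ≤ x ^ (T * p) := by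
  filter_upwards [eventually_all.2 fun i => (hrv i).eventually_measureReal_rpow_le_max_le hp (hu i),
    eventually_ge_atTop 1] with x hx hx1
  rw [hindep.measureReal_iInter_preimage (s := fun i => {t | x ^ u i ≤ max 1 t})
    fun i => measurableSet_le measurable_const (measurable_const.max measurable_id)]
  calc ∏ i, P.real (X i ⁻¹' {t | x ^ u i ≤ max 1 t}) ≤ ∏ i, x ^ (u i * p) :=
        Finset.prod_le_prod (fun _ _ => measureReal_nonneg) fun i _ => hx i
    _ = x ^ ((∑ i, u i) * p) := by rw [Finset.sum_mul, Real.rpow_sum_of_pos (by linarith)]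
    _ ≤ x ^ (T * p) := Real.rpow_le_rpow_of_exponent_le hx1 (mul_le_mul_of_nonpos_right hT hp0)

lemma eventually_rpow_le_measureReal_iInter (hindep : iIndepFun X P)
    (hrv : ∀ i, RegVarNegOne P (X i)) {q : ℝ} (hq : q < -1) (hu : ∀ i, 0 < u i) :
    ∀ᶠ x in atTop, x ^ ((∑ i, u i) * q) ≤ P.real (⋂ i, X i ⁻¹' Set.Ioi (x ^ u i)) := by
  filter_upwards [eventually_all.2 fun i => (hrv i).eventually_rpow_le_measureReal hq (hu i),
    eventually_gt_atTop 0] with x hx hx0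
  rw [hindep.measureReal_iInter_preimage fun _ => measurableSet_Ioi, Finset.sum_mul,
    Real.rpow_sum_of_pos hx0]
  exact Finset.prod_le_prod (fun _ _ => by positivity) fun i _ => hx i

end Boxes

section JointTail

variable {Ω : Type*} [MeasurableSpace Ω] {P : Measure Ω} [IsProbabilityMeasure P] {n : ℕ}
  {X : Fin n → Ω → ℝ} {a b : Fin n → ℝ} {ε : ℝ}

theorem isLittleO_measureReal_joint (hX0 : ∀ i ω, 0 ≤ X i ω) (hindep : iIndepFun X P)
    (hrv : ∀ i, RegVarNegOne P (X i)) (ha : ∀ i, 0 ≤ a i) (hb : ∀ i, 0 ≤ b i) {S : ℝ}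
    (hS : ∀ κ, FeasN a b κ → S ≤ ∑ i, κ i) (hε : 0 < ε) :
    (fun x => P.real {ω | x < ∏ i, X i ω ^ a i ∧ x < ∏ i, X i ω ^ b i}) =o[atTop]
      fun x => x ^ (ε - S) := by
  obtain ⟨δ, ⟨hδ, hδ1⟩, hδS⟩ : ∃ δ ∈ Set.Ioo (0 : ℝ) 1, S - ε < (S - n * δ) * (1 - δ) :=
    exists_mem_Ioo_of_eventually
      (continuousAt_const.eventually_lt (by fun_prop) (by simpa using hε))
  set q := (S - n * δ) * -(1 - δ)
  set K := ⌈S / δ⌉₊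
  have hK : S ≤ K * δ := (div_le_iff₀ hδ).1 (Nat.le_ceil _)
  set W := (Fintype.piFinset fun _ : Fin n => Finset.range (K + 1)).filter
    (fun w => S - n * δ ≤ ∑ i, (w i : ℝ) * δ)
  have hbox : ∀ᶠ x in atTop, ∀ w ∈ W,
      P.real (⋂ i, X i ⁻¹' {t | x ^ ((w i : ℝ) * δ) ≤ max 1 t}) ≤ x ^ q :=
    (eventually_all_finset W).2 fun w hw => eventually_measureReal_iInter_le hindep hrv
      (by linarith) (by linarith) (fun i => by positivity) (Finset.mem_filter.1 hw).2
  have hbound : ∀ᶠ x in atTop,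
      P.real {ω | x < ∏ i, X i ω ^ a i ∧ x < ∏ i, X i ω ^ b i} ≤ W.card * x ^ q := by
    filter_upwards [hbox, eventually_gt_atTop 1] with x hbox hx
    calc _ ≤ P.real (⋃ w ∈ W, ⋂ i, X i ⁻¹' {t | x ^ ((w i : ℝ) * δ) ≤ max 1 t}) :=
          measureReal_mono (setOf_lt_prod_rpow_subset_biUnion hX0 ha hb hS hδ hK hx)
            (measure_ne_top _ _)
      _ ≤ ∑ w ∈ W, P.real (⋂ i, X i ⁻¹' {t | x ^ ((w i : ℝ) * δ) ≤ max 1 t}) :=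
          measureReal_biUnion_finset_le _ _
      _ ≤ ∑ w ∈ W, x ^ q := Finset.sum_le_sum hbox
      _ = W.card * x ^ q := by rw [Finset.sum_const, nsmul_eq_mul]
  refine (IsBigO.of_bound W.card ?_).trans_isLittleO
    (isLittleO_rpow_rpow_atTop (show q < ε - S by linarith))
  filter_upwards [hbound, eventually_gt_atTop 0] with x hx hx0
  rwa [Real.norm_of_nonneg measureReal_nonneg, Real.norm_of_nonneg (Real.rpow_nonneg hx0.le _)]

theorem rpow_isLittleO_measureReal_joint (hindep : iIndepFun X P)
    (hrv : ∀ i, RegVarNegOne P (X i)) (ha : ∀ i, 0 ≤ a i) (hb : ∀ i, 0 ≤ b i)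
    {κ : Fin n → ℝ} (hκ : FeasN a b κ) (hε : 0 < ε) :
    (fun x => x ^ (-ε - ∑ i, κ i)) =o[atTop]
      fun x => P.real {ω | x < ∏ i, X i ω ^ a i ∧ x < ∏ i, X i ω ^ b i} := by
  obtain ⟨hκ0, hκa, hκb⟩ := hκ
  set S := ∑ i, κ i
  obtain ⟨δ, ⟨hδ, -⟩, hδS⟩ : ∃ δ ∈ Set.Ioo (0 : ℝ) 1, ((1 + δ) * S + n * δ) * (1 + δ) < S + ε :=
    exists_mem_Ioo_of_eventually
      ((by fun_prop : ContinuousAt (fun δ : ℝ => ((1 + δ) * S + n * δ) * (1 + δ)) 0).eventually_lt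
        continuousAt_const (by simpa using hε))
  set t : Fin n → ℝ := fun i => (1 + δ) * κ i + δ
  have hsum : ∑ i, t i = (1 + δ) * S + n * δ := by
    simp [t, S, Finset.sum_add_distrib, Finset.mul_sum]
  have hct : ∀ c : Fin n → ℝ, (∀ i, 0 ≤ c i) → 1 ≤ ∑ i, c i * κ i → 1 < ∑ i, c i * t i := by
    intro c hc hcκ
    have hsplit : ∑ i, c i * t i = (1 + δ) * ∑ i, c i * κ i + δ * ∑ i, c i := by
      simp only [t, Finset.mul_sum, ← Finset.sum_add_distrib]
      exact Finset.sum_congr rfl fun i _ => by ring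
    have := Finset.sum_nonneg fun i (_ : i ∈ Finset.univ) => hc i
    nlinarith
  have hsub : ∀ x, 1 < x → ⋂ i, X i ⁻¹' Set.Ioi (x ^ t i) ⊆
      {ω | x < ∏ i, X i ω ^ a i ∧ x < ∏ i, X i ω ^ b i} := fun x hx ω hω => by
    have hω' : ∀ i, x ^ t i ≤ X i ω := fun i => (Set.mem_iInter.1 hω i).le
    exact ⟨lt_prod_rpow_of_rpow_le hx ha (hct a ha hκa) hω',
      lt_prod_rpow_of_rpow_le hx hb (hct b hb hκb) hω'⟩
  have hbound : ∀ᶠ x in atTop, x ^ ((∑ i, t i) * -(1 + δ)) ≤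
      P.real {ω | x < ∏ i, X i ω ^ a i ∧ x < ∏ i, X i ω ^ b i} := by
    filter_upwards [eventually_rpow_le_measureReal_iInter (u := t) hindep hrv
      (show -(1 + δ) < -1 by linarith) (fun i => by have := hκ0 i; positivity),
      eventually_gt_atTop 1] with x hx hx1
    exact hx.trans (measureReal_mono (hsub x hx1) (measure_ne_top _ _))
  refine (isLittleO_rpow_rpow_atTop (show -ε - S < (∑ i, t i) * -(1 + δ) by rw [hsum]; linarith))
    |>.trans_isBigO (IsBigO.of_bound 1 ?_)
  filter_upwards [hbound, eventually_gt_atTop 0] with x hx hx0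
  rwa [one_mul, Real.norm_of_nonneg (by positivity), Real.norm_of_nonneg measureReal_nonneg]

end JointTail

theorem power_products_order_general {Ω : Type*} [MeasurableSpace Ω] (P : Measure Ω)
    [IsProbabilityMeasure P] {n : ℕ} (X : Fin n → Ω → ℝ)
    (hX0 : ∀ i ω, 0 ≤ X i ω)
    (hindep : iIndepFun X P)
    (hrv : ∀ i, RegVarNegOne P (X i))
    (a b : Fin n → ℝ) (ha : ∀ i, 0 ≤ a i) (hb : ∀ i, 0 ≤ b i)
    (κ : Fin n → ℝ) (hfeas : FeasN a b κ)
    (hopt : ∀ κ' : Fin n → ℝ, FeasN a b κ' → ∑ i, κ i ≤ ∑ i, κ' i)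
    (ε : ℝ) (hε : 0 < ε) :
    Tendsto (fun x : ℝ =>
        (P {ω | x < ∏ i, X i ω ^ a i ∧ x < ∏ i, X i ω ^ b i}).toReal /
          x ^ (ε - ∑ i, κ i)) atTop (nhds 0) ∧
    Tendsto (fun x : ℝ =>
        x ^ (-ε - ∑ i, κ i) /
          (P {ω | x < ∏ i, X i ω ^ a i ∧ x < ∏ i, X i ω ^ b i}).toReal)
      atTop (nhds 0) :=
  ⟨(isLittleO_measureReal_joint hX0 hindep hrv ha hb hopt hε).tendsto_div_nhds_zero,
    (rpow_isLittleO_measureReal_joint hindep hrv ha hb hfeas hε).tendsto_div_nhds_zero⟩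

/-- Theorem 4.2 (iii): for Y₀ = ∏ X_i^{α_i}, Y₁ = ∏ X_i^{β_i} and any optimal solution
κ of the linear program, P(Y₀ > x, Y₁ > x) = o(x^{ε-Σκ}) and
x^{-ε-Σκ} = o(P(Y₀ > x, Y₁ > x)) for every ε > 0. -/
theorem power_products_order {Ω : Type*} [MeasurableSpace Ω] (P : Measure Ω)
    [IsProbabilityMeasure P] {n : ℕ} (X : Fin n → Ω → ℝ)
    (hXmeas : ∀ i, Measurable (X i))
    (hX0 : ∀ i ω, 0 ≤ X i ω)
    (hindep : iIndepFun X P)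
    (hrv : ∀ i, RegVarNegOne P (X i))
    (a b : Fin n → ℝ) (ha : ∀ i, 0 ≤ a i) (hb : ∀ i, 0 ≤ b i)
    (hamax : ∃ i, 0 < a i) (hbmax : ∃ i, 0 < b i)
    (κ : Fin n → ℝ) (hfeas : FeasN a b κ)
    (hopt : ∀ κ' : Fin n → ℝ, FeasN a b κ' → ∑ i, κ i ≤ ∑ i, κ' i)
    (ε : ℝ) (hε : 0 < ε) :
    Tendsto (fun x : ℝ =>
        (P {ω | x < ∏ i, X i ω ^ a i ∧ x < ∏ i, X i ω ^ b i}).toReal /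
          x ^ (ε - ∑ i, κ i)) atTop (nhds 0) ∧
    Tendsto (fun x : ℝ =>
        x ^ (-ε - ∑ i, κ i) /
          (P {ω | x < ∏ i, X i ω ^ a i ∧ x < ∏ i, X i ω ^ b i}).toReal)
      atTop (nhds 0) :=
  power_products_order_general P X hX0 hindep hrv a b ha hb κ hfeas hopt ε hε
end

section
/- Let X_i, i ∈ ℕ, be i.i.d. nonnegative random variables, regularly varying with index −1, and let α_i, β_i ≥ 0 satisfy sup_i α_i > 0, sup_i β_i > 0, Σ α_i < ∞, Σ β_i < ∞. Then: (a) Π_{i=1}^n X_i^{α_i} and Π_{i=1}^n X_i^{β_i} converge almost surely (in [0,∞)) as n → ∞; (b) the infinite-dimensional linear program 'minimize Σ_{i=1}^∞ κ_i subject to Σ α_i κ_i ≥ 1, Σ β_i κ_i ≥ 1, κ_i ≥ 0' has an optimal solution, and every optimal solution has κ_i = 0 for all i > n for some fixed finite n depending only on (α_i), (β_i); hence the problem is equivalent to a finite-dimensional linear program. -/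
/-!
(a) Regular variation with index `-1` gives `P(X > 2x) ≤ (3/4) P(X > x)` for large `x`, so the
tails `P(X > 2^k x₀)` decay geometrically and `E log⁺ X < ∞`. Hence
`E ∑ αᵢ log⁺ Xᵢ = (∑ αᵢ) E log⁺ X₀ < ∞`, the series converges a.s., and so do the partial products:
the factors `max(Xᵢ, 1)^αᵢ` multiply to `exp ∑ αᵢ log⁺ Xᵢ`, and the factors `min(Xᵢ, 1)^αᵢ ≤ 1`
give a decreasing product.

(b) Fix `p`, `q` with `αₚ, β_q > 0` and `n ≥ p, q` beyond which `αᵢ ≤ αₚ / 4` and `βᵢ ≤ β_q / 4`.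
Replacing the mass `T` that a feasible `κ` puts beyond `n` by `T / 4` at `p` and `T / 4` at `q`
keeps it feasible and costs only `T / 2`. So optimal solutions vanish beyond `n`, and an optimum
exists because the feasible points vanishing beyond `n` form a compact subset of `[0, ∞]^ℕ` on
which the objective is continuous.
-/

open MeasureTheory ProbabilityTheory Filter Topology
open scoped ENNReal

/-- feasibility for the infinite-dimensional linear program (κ valued in [0,∞]) -/
def FeasInf (a b : ℕ → ℝ) (κ : ℕ → ℝ≥0∞) : Prop :=
  1 ≤ ∑' i, ENNReal.ofReal (a i) * κ i ∧ 1 ≤ ∑' i, ENNReal.ofReal (b i) * κ i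

open Real Set

lemma RegVarNegOne.exists_measure_lt_le_geometric {Ω : Type*} [MeasurableSpace Ω]
    {P : Measure Ω} [IsProbabilityMeasure P] {Y : Ω → ℝ} (hY : RegVarNegOne P Y) :
    ∃ x₀ : ℝ, 1 ≤ x₀ ∧ ∀ k : ℕ, P {ω | 2 ^ k * x₀ < Y ω} ≤ (3 / 4 : ℝ≥0∞) ^ k := by
  obtain ⟨x₁, hx₁⟩ := eventually_atTop.1 <|
    (hY 2 two_pos).eventually_lt_const (show (2 : ℝ)⁻¹ < 3 / 4 by norm_num)
  have hstep (x : ℝ) (hx : max x₁ 1 ≤ x) :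
      P {ω | 2 * x < Y ω} ≤ 3 / 4 * P {ω | x < Y ω} := by
    have hmono : (P {ω | 2 * x < Y ω}).toReal ≤ (P {ω | x < Y ω}).toReal :=
      measureReal_mono fun ω (hω : 2 * x < Y ω) => show x < Y ω by
        linarith [le_of_max_le_right hx]
    have hratio := hx₁ x (le_of_max_le_left hx)
    have hreal : (P {ω | 2 * x < Y ω}).toReal ≤ 3 / 4 * (P {ω | x < Y ω}).toReal := by
      rcases (ENNReal.toReal_nonneg (a := P {ω | x < Y ω})).eq_or_lt with h0 | hpos
      · rw [← h0] at hmono ⊢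
        simpa using hmono
      · exact ((div_lt_iff₀ hpos).1 hratio).le
    rwa [← ENNReal.toReal_le_toReal (measure_ne_top _ _) (by finiteness), ENNReal.toReal_mul,
      show (3 / 4 : ℝ≥0∞).toReal = 3 / 4 by norm_num]
  refine ⟨max x₁ 1, le_max_right _ _, fun k => ?_⟩
  induction k with
  | zero => simpa using prob_le_one
  | succ k ih =>
    have hle : max x₁ 1 ≤ 2 ^ k * max x₁ 1 :=
      le_mul_of_one_le_left (by positivity) (one_le_pow₀ one_le_two)
    calc P {ω | 2 ^ (k + 1) * max x₁ 1 < Y ω} = P {ω | 2 * (2 ^ k * max x₁ 1) < Y ω} := by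
          rw [pow_succ', mul_assoc]
      _ ≤ 3 / 4 * P {ω | 2 ^ k * max x₁ 1 < Y ω} := hstep _ hle
      _ ≤ 3 / 4 * (3 / 4) ^ k := by gcongr
      _ = (3 / 4) ^ (k + 1) := (pow_succ' _ _).symm

lemma exists_posLog_le_log_add_mul_log_two {x₀ x : ℝ} (hx₀ : 1 ≤ x₀) (hx : 0 ≤ x) :
    ∃ N : ℕ, log⁺ x ≤ log x₀ + N * log 2 ∧ ∀ k < N, 2 ^ k * x₀ < x := by
  have hx₀pos : 0 < x₀ := one_pos.trans_le hx₀
  rcases le_or_gt x x₀ with hxx₀ | hx₀x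
  · refine ⟨0, ?_, fun k hk => absurd hk k.not_lt_zero⟩
    rw [Nat.cast_zero, zero_mul, add_zero, ← posLog_eq_log (by rwa [abs_of_pos hx₀pos])]
    exact posLog_le_posLog hx hxx₀
  refine ⟨⌈logb 2 (x / x₀)⌉₊, ?_, fun k hk => ?_⟩
  · have hxpos : 0 < x := hx₀pos.trans hx₀x
    rw [posLog_eq_log (by rw [abs_of_pos hxpos]; linarith), ← sub_le_iff_le_add',
      ← log_div hxpos.ne' hx₀pos.ne', ← div_le_iff₀ (log_pos one_lt_two), log_div_log]
    exact Nat.le_ceil _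
  · rw [Nat.lt_ceil, lt_logb_iff_rpow_lt one_lt_two (div_pos (hx₀pos.trans hx₀x) hx₀pos),
      rpow_natCast, lt_div_iff₀ hx₀pos] at hk
    exact hk

lemma ofReal_posLog_le_tsum_indicator {x₀ x : ℝ} (hx₀ : 1 ≤ x₀) (hx : 0 ≤ x) :
    ENNReal.ofReal (log⁺ x) ≤
      ENNReal.ofReal (log x₀) +
        ENNReal.ofReal (log 2) * ∑' k : ℕ, (Ioi (2 ^ k * x₀)).indicator 1 x := by
  obtain ⟨N, hlog, hN⟩ := exists_posLog_le_log_add_mul_log_two hx₀ hx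
  have hcount : (N : ℝ≥0∞) ≤ ∑' k : ℕ, (Ioi (2 ^ k * x₀)).indicator 1 x :=
    calc (N : ℝ≥0∞) = ∑ k ∈ Finset.range N, (Ioi (2 ^ k * x₀)).indicator 1 x := by
          rw [Finset.sum_congr rfl fun k hk =>
            indicator_of_mem (s := Ioi _) (hN k (Finset.mem_range.1 hk)) _]
          simp
      _ ≤ _ := ENNReal.sum_le_tsum _
  calc ENNReal.ofReal (log⁺ x) ≤ ENNReal.ofReal (log x₀ + N * log 2) :=
        ENNReal.ofReal_le_ofReal hlog
    _ = ENNReal.ofReal (log x₀) + ENNReal.ofReal (log 2) * N := by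
        rw [ENNReal.ofReal_add (log_nonneg hx₀) (by positivity),
          ENNReal.ofReal_mul' (by positivity),
          ENNReal.ofReal_natCast, mul_comm]
    _ ≤ _ := by gcongr

lemma lintegral_posLog_lt_top_of_measure_lt_le_geometric {Ω : Type*} [MeasurableSpace Ω]
    {μ : Measure Ω} [IsFiniteMeasure μ] {Y : Ω → ℝ} (hY : Measurable Y) (hY0 : ∀ ω, 0 ≤ Y ω)
    {x₀ : ℝ} {r : ℝ≥0∞} (hx₀ : 1 ≤ x₀) (hr : r < 1)
    (htail : ∀ k : ℕ, μ {ω | 2 ^ k * x₀ < Y ω} ≤ r ^ k) :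
    ∫⁻ ω, ENNReal.ofReal (log⁺ (Y ω)) ∂μ < ∞ := by
  have hmeas (k : ℕ) : MeasurableSet {ω | 2 ^ k * x₀ < Y ω} := measurableSet_lt measurable_const hY
  calc ∫⁻ ω, ENNReal.ofReal (log⁺ (Y ω)) ∂μ
      ≤ ∫⁻ ω, ENNReal.ofReal (log x₀) +
          ENNReal.ofReal (log 2) * ∑' k : ℕ, {ω | 2 ^ k * x₀ < Y ω}.indicator 1 ω ∂μ :=
        lintegral_mono fun ω => ofReal_posLog_le_tsum_indicator hx₀ (hY0 ω)
    _ = ENNReal.ofReal (log x₀) * μ univ +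
          ENNReal.ofReal (log 2) * ∑' k : ℕ, μ {ω | 2 ^ k * x₀ < Y ω} := by
        rw [lintegral_add_left measurable_const, lintegral_const,
          lintegral_const_mul _ (.tsum fun k => measurable_one.indicator (hmeas k)),
          lintegral_tsum fun k => (measurable_one.indicator (hmeas k)).aemeasurable]
        simp_rw [lintegral_indicator_one (hmeas _)]
    _ ≤ ENNReal.ofReal (log x₀) * μ univ + ENNReal.ofReal (log 2) * ∑' k : ℕ, r ^ k := by
        gcongr with k
        exact htail k
    _ < ∞ := by
        have := tsum_geometric_lt_top.2 hr
        finiteness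

lemma RegVarNegOne.lintegral_posLog_lt_top {Ω : Type*} [MeasurableSpace Ω]
    {P : Measure Ω} [IsProbabilityMeasure P] {Y : Ω → ℝ} (hrv : RegVarNegOne P Y)
    (hY : Measurable Y) (hY0 : ∀ ω, 0 ≤ Y ω) :
    ∫⁻ ω, ENNReal.ofReal (log⁺ (Y ω)) ∂P < ∞ := by
  obtain ⟨x₀, hx₀, htail⟩ := hrv.exists_measure_lt_le_geometric
  exact lintegral_posLog_lt_top_of_measure_lt_le_geometric hY hY0 hx₀
    (ENNReal.div_lt_of_lt_mul' (by norm_num)) htail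

lemma ae_tsum_mul_lt_top {Ω : Type*} [MeasurableSpace Ω] {μ : Measure Ω} {f : ℕ → Ω → ℝ≥0∞}
    (hf : ∀ i, AEMeasurable (f i) μ) {C : ℝ≥0∞} (hC : C ≠ ∞) (hfC : ∀ i, ∫⁻ ω, f i ω ∂μ ≤ C)
    {c : ℕ → ℝ≥0∞} (hc : ∑' i, c i ≠ ∞) :
    ∀ᵐ ω ∂μ, ∑' i, c i * f i ω < ∞ := by
  refine ae_lt_top' (.tsum fun i => (hf i).const_mul _)
    (ne_top_of_le_ne_top (ENNReal.mul_ne_top hc hC) ?_)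
  calc ∫⁻ ω, ∑' i, c i * f i ω ∂μ = ∑' i, c i * ∫⁻ ω, f i ω ∂μ := by
        rw [lintegral_tsum fun i => (hf i).const_mul _]
        exact tsum_congr fun i => lintegral_const_mul'' _ (hf i)
    _ ≤ ∑' i, c i * C := by gcongr with i; exact hfC i
    _ = (∑' i, c i) * C := ENNReal.tsum_mul_right

lemma ae_summable_mul_posLog {Ω : Type*} [MeasurableSpace Ω] {μ : Measure Ω} {X : ℕ → Ω → ℝ}
    (hid : ∀ i, IdentDistrib (X i) (X 0) μ μ)
    (hint : ∫⁻ ω, ENNReal.ofReal (log⁺ (X 0 ω)) ∂μ < ∞) {a : ℕ → ℝ} (ha : ∀ i, 0 ≤ a i)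
    (hsum : Summable a) :
    ∀ᵐ ω ∂μ, Summable fun i => a i * log⁺ (X i ω) := by
  have hlog : Measurable fun x => ENNReal.ofReal (log⁺ x) :=
    continuous_posLog.measurable.ennreal_ofReal
  filter_upwards [ae_tsum_mul_lt_top (f := fun i ω => ENNReal.ofReal (log⁺ (X i ω)))
    (fun i => hlog.comp_aemeasurable (hid i).aemeasurable_fst) hint.ne
    (fun i => ((hid i).comp hlog).lintegral_eq.le)
    (c := fun i => ENNReal.ofReal (a i)) (by rw [← ENNReal.ofReal_tsum_of_nonneg ha hsum]; simp)]
    with ω hω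
  simpa [← ENNReal.ofReal_mul (ha _), ENNReal.toReal_ofReal (mul_nonneg (ha _) posLog_nonneg)]
    using ENNReal.summable_toReal hω.ne

lemma exists_tendsto_prod_rpow {x c : ℕ → ℝ} (hx : ∀ i, 0 ≤ x i) (hc : ∀ i, 0 ≤ c i)
    (hs : Summable fun i => c i * log⁺ (x i)) :
    ∃ L, Tendsto (fun n => ∏ i ∈ Finset.range n, x i ^ c i) atTop (𝓝 L) := by
  have hsplit (i : ℕ) : x i ^ c i = max (x i) 1 ^ c i * min (x i) 1 ^ c i := by
    rw [← mul_rpow (by positivity) (le_min (hx i) zero_le_one), max_mul_min, mul_one]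
  have hbig : Tendsto (fun n => ∏ i ∈ Finset.range n, max (x i) 1 ^ c i) atTop
      (𝓝 (exp (∑' i, c i * log⁺ (x i)))) := by
    have hexp (i : ℕ) : max (x i) 1 ^ c i = exp (c i * log⁺ (x i)) := by
      rw [rpow_def_of_pos (by positivity), posLog_eq_log_max_one (hx i), max_comm, mul_comm]
    simp_rw [hexp, ← exp_sum]
    exact (continuous_exp.tendsto _).comp hs.hasSum.tendsto_sum_nat
  have hmin0 (i : ℕ) : 0 ≤ min (x i) 1 ^ c i := rpow_nonneg (le_min (hx i) zero_le_one) _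
  have hsmall : Antitone fun n => ∏ i ∈ Finset.range n, min (x i) 1 ^ c i :=
    antitone_nat_of_succ_le fun n => by
      rw [Finset.prod_range_succ]
      exact mul_le_of_le_one_right (Finset.prod_nonneg fun i _ => hmin0 i)
        (rpow_le_one (le_min (hx n) zero_le_one) (min_le_right _ _) (hc n))
  refine ⟨_, (hbig.mul (tendsto_atTop_ciInf hsmall ⟨0, ?_⟩)).congr fun n => ?_⟩
  · rintro _ ⟨n, rfl⟩
    exact Finset.prod_nonneg fun i _ => hmin0 i
  · simp_rw [hsplit, Finset.prod_mul_distrib]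

lemma tsum_mul_indicator_Iic_add_tsum_mul_indicator_Ioi (n : ℕ) (c κ : ℕ → ℝ≥0∞) :
    ∑' i, c i * (Iic n).indicator κ i + ∑' i, c i * (Ioi n).indicator κ i = ∑' i, c i * κ i := by
  rw [← ENNReal.tsum_add]
  congr! 2 with i
  rw [← mul_add, ← Pi.add_apply, ← compl_Iic, indicator_self_add_compl]

lemma tsum_indicator_Iic_add_tsum_indicator_Ioi (n : ℕ) (κ : ℕ → ℝ≥0∞) :
    ∑' i, (Iic n).indicator κ i + ∑' i, (Ioi n).indicator κ i = ∑' i, κ i := by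
  simpa using tsum_mul_indicator_Iic_add_tsum_mul_indicator_Ioi n (fun _ => 1) κ

lemma tsum_mul_indicator_Ioi_le {n : ℕ} {c : ℕ → ℝ≥0∞} {d : ℝ≥0∞} (hc : ∀ i, n < i → c i ≤ d)
    (κ : ℕ → ℝ≥0∞) :
    ∑' i, c i * (Ioi n).indicator κ i ≤ d * ∑' i, (Ioi n).indicator κ i := by
  rw [← ENNReal.tsum_mul_left]
  refine ENNReal.tsum_le_tsum fun i => ?_
  by_cases hi : n < i
  · simpa [hi] using mul_le_mul_left (hc i hi) _
  · simp [hi]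

lemma tsum_mul_pi_single (c : ℕ → ℝ≥0∞) (p : ℕ) (x : ℝ≥0∞) :
    ∑' i, c i * (Pi.single p x : ℕ → ℝ≥0∞) i = c p * x := by
  rw [tsum_eq_single p fun i hi => by simp [hi]]
  simp

noncomputable def reallocateTail (n p q : ℕ) (κ : ℕ → ℝ≥0∞) : ℕ → ℝ≥0∞ :=
  (Iic n).indicator κ + Pi.single p ((∑' i, (Ioi n).indicator κ i) / 4) +
    Pi.single q ((∑' i, (Ioi n).indicator κ i) / 4)

section reallocateTail

variable {n p q : ℕ} {κ : ℕ → ℝ≥0∞}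

lemma reallocateTail_comm : reallocateTail n p q κ = reallocateTail n q p κ :=
  add_right_comm _ _ _

lemma reallocateTail_eq_zero (hp : p ≤ n) (hq : q ≤ n) {i : ℕ} (hi : n < i) :
    reallocateTail n p q κ i = 0 := by
  simp [reallocateTail, (hp.trans_lt hi).ne', (hq.trans_lt hi).ne', hi]

lemma tsum_mul_reallocateTail (c : ℕ → ℝ≥0∞) :
    ∑' i, c i * reallocateTail n p q κ i = ∑' i, c i * (Iic n).indicator κ i +
      c p * ((∑' i, (Ioi n).indicator κ i) / 4) + c q * ((∑' i, (Ioi n).indicator κ i) / 4) := by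
  simp only [reallocateTail, Pi.add_apply, mul_add]
  rw [ENNReal.tsum_add, ENNReal.tsum_add, tsum_mul_pi_single, tsum_mul_pi_single]

lemma tsum_mul_le_tsum_mul_reallocateTail {c : ℕ → ℝ≥0∞} (hc : ∀ i, n < i → c i ≤ c p / 4) :
    ∑' i, c i * κ i ≤ ∑' i, c i * reallocateTail n p q κ i := by
  rw [← tsum_mul_indicator_Iic_add_tsum_mul_indicator_Ioi n, tsum_mul_reallocateTail, add_assoc]
  gcongr
  calc ∑' i, c i * (Ioi n).indicator κ i ≤ c p / 4 * ∑' i, (Ioi n).indicator κ i :=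
        tsum_mul_indicator_Ioi_le hc κ
    _ = c p * ((∑' i, (Ioi n).indicator κ i) / 4) := by
        rw [div_eq_mul_inv, div_eq_mul_inv, mul_right_comm, mul_assoc]
    _ ≤ _ := le_self_add

lemma tsum_reallocateTail :
    ∑' i, reallocateTail n p q κ i =
      ∑' i, (Iic n).indicator κ i + (∑' i, (Ioi n).indicator κ i) / 2 := by
  have h := tsum_mul_reallocateTail (n := n) (p := p) (q := q) (κ := κ) (fun _ => 1)
  simp only [one_mul] at h
  rw [h, add_assoc, ENNReal.div_add_div_same, ← two_mul, show (4 : ℝ≥0∞) = 2 * 2 by norm_num,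
    ENNReal.mul_div_mul_left _ _ two_ne_zero ENNReal.ofNat_ne_top]

lemma tsum_reallocateTail_le : ∑' i, reallocateTail n p q κ i ≤ ∑' i, κ i := by
  rw [tsum_reallocateTail, ← tsum_indicator_Iic_add_tsum_indicator_Ioi n κ]
  gcongr
  exact ENNReal.half_le_self

lemma tsum_reallocateTail_lt (hκ : ∑' i, κ i ≠ ∞) {j : ℕ} (hj : n < j) (hκj : κ j ≠ 0) :
    ∑' i, reallocateTail n p q κ i < ∑' i, κ i := by
  rw [← tsum_indicator_Iic_add_tsum_indicator_Ioi n κ, ENNReal.add_ne_top] at hκ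
  rw [← tsum_indicator_Iic_add_tsum_indicator_Ioi n κ, tsum_reallocateTail]
  refine ENNReal.add_lt_add_left hκ.1 (ENNReal.half_lt_self ?_ hκ.2)
  rw [Ne, ENNReal.tsum_eq_zero, not_forall]
  exact ⟨j, by simpa [hj] using hκj⟩

end reallocateTail

lemma FeasInf.reallocateTail {a b : ℕ → ℝ} {n p q : ℕ} {κ : ℕ → ℝ≥0∞} (hκ : FeasInf a b κ)
    (htail : ∀ i, n < i → a i ≤ a p / 4 ∧ b i ≤ b q / 4) :
    FeasInf a b (reallocateTail n p q κ) := by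
  have hquarter {x y : ℝ} (h : x ≤ y / 4) : ENNReal.ofReal x ≤ ENNReal.ofReal y / 4 := by
    simpa [ENNReal.ofReal_div_of_pos] using ENNReal.ofReal_le_ofReal h
  refine ⟨hκ.1.trans (tsum_mul_le_tsum_mul_reallocateTail fun i hi => hquarter (htail i hi).1), ?_⟩
  rw [reallocateTail_comm]
  exact hκ.2.trans (tsum_mul_le_tsum_mul_reallocateTail fun i hi => hquarter (htail i hi).2)

lemma feasInf_single_add_single {a b : ℕ → ℝ} {p q : ℕ} (hp : 0 < a p) (hq : 0 < b q) :
    FeasInf a b (Pi.single p (ENNReal.ofReal (a p))⁻¹ + Pi.single q (ENNReal.ofReal (b q))⁻¹) := by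
  simp only [FeasInf, Pi.add_apply, mul_add]
  rw [ENNReal.tsum_add, ENNReal.tsum_add, tsum_mul_pi_single, tsum_mul_pi_single,
    tsum_mul_pi_single, tsum_mul_pi_single,
    ENNReal.mul_inv_cancel (by simpa using hp) ENNReal.ofReal_ne_top,
    ENNReal.mul_inv_cancel (by simpa using hq) ENNReal.ofReal_ne_top]
  exact ⟨le_self_add, le_add_self⟩

lemma continuousOn_tsum_of_forall_lt_eq_zero {E M : Type*} [Zero E] [TopologicalSpace E]
    [AddCommMonoid M] [TopologicalSpace M] [ContinuousAdd M] (n : ℕ) {g : ℕ → E → M}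
    (hg : ∀ i, Continuous (g i)) (hg0 : ∀ i, g i 0 = 0) :
    ContinuousOn (fun κ : ℕ → E => ∑' i, g i (κ i)) {κ | ∀ i, n < i → κ i = 0} := by
  refine (continuous_finsetSum (Finset.range (n + 1))
    fun i _ => (hg i).comp (continuous_apply i)).continuousOn.congr fun κ hκ => ?_
  refine tsum_eq_sum fun i hi => ?_
  rw [hκ i (by simpa [Nat.lt_succ_iff] using hi), hg0]

lemma isClosed_setOf_forall_lt_eq_zero {E : Type*} [Zero E] [TopologicalSpace E] [T1Space E]
    (n : ℕ) : IsClosed {κ : ℕ → E | ∀ i, n < i → κ i = 0} := by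
  simp only [ofPred_forall]
  exact isClosed_iInter fun i => isClosed_iInter fun _ =>
    isClosed_singleton.preimage (continuous_apply i)

lemma isCompact_feasInf_inter_forall_lt_eq_zero (a b : ℕ → ℝ) (n : ℕ) :
    IsCompact ({κ | FeasInf a b κ} ∩ {κ | ∀ i, n < i → κ i = 0}) := by
  have hcont (c : ℕ → ℝ) := continuousOn_tsum_of_forall_lt_eq_zero n
    (g := fun i x => ENNReal.ofReal (c i) * x)
    (fun _ => ENNReal.continuous_const_mul ENNReal.ofReal_ne_top) fun _ => mul_zero _
  have hclosed := (hcont b).mono inter_subset_left |>.preimage_isClosed_of_isClosed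
    ((hcont a).preimage_isClosed_of_isClosed (isClosed_setOf_forall_lt_eq_zero n)
      (isClosed_Ici (a := 1)))
    (isClosed_Ici (a := 1))
  convert hclosed.isCompact using 1
  ext κ
  simp only [FeasInf, mem_inter_iff, mem_preimage, mem_Ici, mem_ofPred_eq]
  tauto

def IsOptimalInf (a b : ℕ → ℝ) (κ : ℕ → ℝ≥0∞) : Prop :=
  FeasInf a b κ ∧ ∀ κ', FeasInf a b κ' → ∑' i, κ i ≤ ∑' i, κ' i

section tail

variable {a b : ℕ → ℝ} {p q n : ℕ}

lemma exists_tail_le_quarter (ha : Tendsto a atTop (𝓝 0)) (hb : Tendsto b atTop (𝓝 0))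
    (hp : 0 < a p) (hq : 0 < b q) :
    ∃ n, p ≤ n ∧ q ≤ n ∧ ∀ i, n < i → a i ≤ a p / 4 ∧ b i ≤ b q / 4 := by
  obtain ⟨m, hm⟩ := eventually_atTop.1 <|
    (ha.eventually_le_const (by positivity : 0 < a p / 4)).and
      (hb.eventually_le_const (by positivity : 0 < b q / 4))
  exact ⟨max m (max p q), by omega, by omega, fun i hi => hm i (by omega)⟩

theorem exists_isOptimalInf_of_tail_le (hp : 0 < a p) (hq : 0 < b q) (hpn : p ≤ n) (hqn : q ≤ n)
    (htail : ∀ i, n < i → a i ≤ a p / 4 ∧ b i ≤ b q / 4) :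
    ∃ κ, IsOptimalInf a b κ := by
  have hmass := continuousOn_tsum_of_forall_lt_eq_zero n (g := fun _ x => (x : ℝ≥0∞))
    (fun _ => continuous_id) fun _ => rfl
  obtain ⟨κ, ⟨hκ, -⟩, hmin⟩ := (isCompact_feasInf_inter_forall_lt_eq_zero a b n).exists_isMinOn
    ⟨_, feasInf_single_add_single hp hq,
      fun i hi => by simp [(hpn.trans_lt hi).ne', (hqn.trans_lt hi).ne']⟩
    (hmass.mono inter_subset_right)
  exact ⟨κ, hκ, fun κ' hκ' => (isMinOn_iff.1 hmin _ ⟨hκ'.reallocateTail htail,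
    fun i hi => reallocateTail_eq_zero hpn hqn hi⟩).trans tsum_reallocateTail_le⟩

theorem IsOptimalInf.eq_zero_of_lt {κ : ℕ → ℝ≥0∞} (hκ : IsOptimalInf a b κ) (hp : 0 < a p)
    (hq : 0 < b q) (htail : ∀ i, n < i → a i ≤ a p / 4 ∧ b i ≤ b q / 4) {i : ℕ} (hi : n < i) :
    κ i = 0 := by
  by_contra hne
  have hfin : ∑' i, κ i ≠ ∞ := ((hκ.2 _ (feasInf_single_add_single hp hq)).trans_lt
    (by simp [ENNReal.tsum_add, hp, hq])).ne
  exact (tsum_reallocateTail_lt hfin hi hne).not_ge (hκ.2 _ (hκ.1.reallocateTail htail))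

end tail

theorem infinite_power_products_general {Ω : Type*} [MeasurableSpace Ω] (P : Measure Ω)
    [IsProbabilityMeasure P] (X : ℕ → Ω → ℝ)
    (hXmeas : ∀ i, Measurable (X i))
    (hX0 : ∀ i ω, 0 ≤ X i ω)
    (hid : ∀ i, IdentDistrib (X i) (X 0) P P)
    (hrv : RegVarNegOne P (X 0))
    (a b : ℕ → ℝ) (ha : ∀ i, 0 ≤ a i) (hb : ∀ i, 0 ≤ b i)
    (hamax : ∃ i, 0 < a i) (hbmax : ∃ i, 0 < b i)
    (hasum : Summable a) (hbsum : Summable b) :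
    -- (a) almost sure convergence of the partial products
    (∀ᵐ ω ∂P,
      (∃ L : ℝ, Tendsto (fun n => ∏ i ∈ Finset.range n, X i ω ^ a i) atTop (nhds L)) ∧
      (∃ L : ℝ, Tendsto (fun n => ∏ i ∈ Finset.range n, X i ω ^ b i) atTop (nhds L))) ∧
    -- (b) the linear program has an optimal solution, and all optimal solutions are
    -- supported on {0,...,n} for a fixed n
    (∃ n : ℕ,
      (∃ κ : ℕ → ℝ≥0∞, FeasInf a b κ ∧
        (∀ κ' : ℕ → ℝ≥0∞, FeasInf a b κ' → ∑' i, κ i ≤ ∑' i, κ' i)) ∧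
      (∀ κ' : ℕ → ℝ≥0∞, FeasInf a b κ' →
        (∀ κ'' : ℕ → ℝ≥0∞, FeasInf a b κ'' → ∑' i, κ' i ≤ ∑' i, κ'' i) →
        ∀ i, n < i → κ' i = 0)) := by
  have hlog := hrv.lintegral_posLog_lt_top (hXmeas 0) (hX0 0)
  refine ⟨?_, ?_⟩
  · filter_upwards [ae_summable_mul_posLog hid hlog ha hasum,
      ae_summable_mul_posLog hid hlog hb hbsum] with ω hωa hωb
    exact ⟨exists_tendsto_prod_rpow (hX0 · ω) ha hωa, exists_tendsto_prod_rpow (hX0 · ω) hb hωb⟩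
  · obtain ⟨p, hp⟩ := hamax
    obtain ⟨q, hq⟩ := hbmax
    obtain ⟨n, hpn, hqn, htail⟩ :=
      exists_tail_le_quarter hasum.tendsto_atTop_zero hbsum.tendsto_atTop_zero hp hq
    exact ⟨n, exists_isOptimalInf_of_tail_le hp hq hpn hqn htail,
      fun κ hκ hmin _ hi => IsOptimalInf.eq_zero_of_lt ⟨hκ, hmin⟩ hp hq htail hi⟩

/-- Theorem 4.4 (existence part): for i.i.d. nonnegative X_i regularly varying with
index -1 and summable exponents with positive suprema, (a) the partial products
∏_{i<n} X_i^{α_i}, ∏_{i<n} X_i^{β_i} converge a.s., and (b) the infinite-dimensional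
linear program has an optimal solution and every optimal solution vanishes beyond
some fixed finite index n, so the problem reduces to a finite-dimensional one. -/
theorem infinite_power_products {Ω : Type*} [MeasurableSpace Ω] (P : Measure Ω)
    [IsProbabilityMeasure P] (X : ℕ → Ω → ℝ)
    (hXmeas : ∀ i, Measurable (X i))
    (hX0 : ∀ i ω, 0 ≤ X i ω)
    (hindep : iIndepFun X P)
    (hid : ∀ i, IdentDistrib (X i) (X 0) P P)
    (hrv : RegVarNegOne P (X 0))
    (a b : ℕ → ℝ) (ha : ∀ i, 0 ≤ a i) (hb : ∀ i, 0 ≤ b i)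
    (hamax : ∃ i, 0 < a i) (hbmax : ∃ i, 0 < b i)
    (hasum : Summable a) (hbsum : Summable b) :
    -- (a) almost sure convergence of the partial products
    (∀ᵐ ω ∂P,
      (∃ L : ℝ, Tendsto (fun n => ∏ i ∈ Finset.range n, X i ω ^ a i) atTop (nhds L)) ∧
      (∃ L : ℝ, Tendsto (fun n => ∏ i ∈ Finset.range n, X i ω ^ b i) atTop (nhds L))) ∧
    -- (b) the linear program has an optimal solution, and all optimal solutions are
    -- supported on {0,...,n} for a fixed n
    (∃ n : ℕ,
      (∃ κ : ℕ → ℝ≥0∞, FeasInf a b κ ∧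
        (∀ κ' : ℕ → ℝ≥0∞, FeasInf a b κ' → ∑' i, κ i ≤ ∑' i, κ' i)) ∧
      (∀ κ' : ℕ → ℝ≥0∞, FeasInf a b κ' →
        (∀ κ'' : ℕ → ℝ≥0∞, FeasInf a b κ'' → ∑' i, κ' i ≤ ∑' i, κ'' i) →
        ∀ i, n < i → κ' i = 0)) :=
  infinite_power_products_general P X hXmeas hX0 hid hrv a b ha hb hamax hbmax hasum hbsum
end
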